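/- arXiv:2208.06536 — 12 statements merged into one kernel-verified Lean document; each statement's English description precedes it below -/
import Mathlib

section
/- Sorted-index characterization of the break-even count: let b ∈ ℝ^N and s ∈ ℝ^M, and let σ : {1,…,N} → {1,…,N} and τ : {1,…,M} → {1,…,M} be bijections with b_{σ(1)} ≥ b_{σ(2)} ≥ … ≥ b_{σ(N)} and s_{τ(1)} ≤ s_{τ(2)} ≤ … ≤ s_{τ(M)}. Then K(b,s) equals the largest k ∈ {1,…,min(M,N)} such that b_{σ(k)} ≥ s_{τ(k)} if such a k exists, and K(b,s) = 0 otherwise. -/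
lemma aux_exists_ge (N m : ℕ) (hm : 1 ≤ m) (f : ℕ → ℕ)
    (hf : Set.BijOn f (Set.Icc 1 N) (Set.Icc 1 N))
    (P : ℕ → Prop) [DecidablePred P]
    (h : m ≤ ((Finset.Icc 1 N).filter fun i => P i).card) :
    ∃ k, m ≤ k ∧ k ≤ N ∧ P (f k) := by
  classical
  set G := (Finset.Icc 1 N).filter (fun k => P (f k)) with hG
  have hcard : G.card = ((Finset.Icc 1 N).filter fun i => P i).card := by
    apply Finset.card_bij (fun a _ => f a)
    · intro a ha
      simp only [hG, Finset.mem_filter, Finset.mem_Icc] at ha ⊢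
      have := hf.mapsTo (Set.mem_Icc.2 ha.1)
      exact ⟨Set.mem_Icc.1 this, ha.2⟩
    · intro a ha b hb hab
      simp only [hG, Finset.mem_filter, Finset.mem_Icc] at ha hb
      exact hf.injOn (Set.mem_Icc.2 ha.1) (Set.mem_Icc.2 hb.1) hab
    · intro c hc
      simp only [Finset.mem_filter, Finset.mem_Icc] at hc
      obtain ⟨a, ha, hfa⟩ := hf.surjOn (Set.mem_Icc.2 hc.1)
      refine ⟨a, ?_, hfa⟩
      simp only [hG, Finset.mem_filter, Finset.mem_Icc]
      exact ⟨Set.mem_Icc.1 ha, by rw [hfa]; exact hc.2⟩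
  by_contra hcon
  push_neg at hcon
  have hsub : G ⊆ Finset.Icc 1 (m - 1) := by
    intro k hk
    simp only [hG, Finset.mem_filter, Finset.mem_Icc] at hk
    have hklt : k < m := by
      by_contra hkm
      exact hcon k (le_of_not_gt hkm) hk.1.2 hk.2
    exact Finset.mem_Icc.2 ⟨hk.1.1, by omega⟩
  have := Finset.card_le_card hsub
  rw [hcard] at this
  rw [Nat.card_Icc] at this
  omega

lemma aux_card_ge (N k : ℕ) (hk1 : 1 ≤ k) (hkN : k ≤ N) (f : ℕ → ℕ)
    (hf : Set.BijOn f (Set.Icc 1 N) (Set.Icc 1 N))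
    (P : ℕ → Prop) [DecidablePred P]
    (h : ∀ i, 1 ≤ i → i ≤ k → P (f i)) :
    k ≤ ((Finset.Icc 1 N).filter fun i => P i).card := by
  classical
  have hsub : (Finset.Icc 1 k).image f ⊆ (Finset.Icc 1 N).filter fun i => P i := by
    intro x hx
    obtain ⟨a, ha, rfl⟩ := Finset.mem_image.1 hx
    rw [Finset.mem_Icc] at ha
    have hmem := hf.mapsTo (Set.mem_Icc.2 ⟨ha.1, le_trans ha.2 hkN⟩)
    exact Finset.mem_filter.2 ⟨Finset.mem_Icc.2 (Set.mem_Icc.1 hmem), h a ha.1 ha.2⟩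
  have hinj : ((Finset.Icc 1 k).image f).card = k := by
    rw [Finset.card_image_of_injOn, Nat.card_Icc]
    · omega
    · intro a ha b hb hab
      rw [Finset.mem_coe, Finset.mem_Icc] at ha hb
      exact hf.injOn (Set.mem_Icc.2 ⟨ha.1, le_trans ha.2 hkN⟩)
        (Set.mem_Icc.2 ⟨hb.1, le_trans hb.2 hkN⟩) hab
  calc k = _ := hinj.symm
    _ ≤ _ := Finset.card_le_card hsub

/-- The break-even count of a double auction: given buyers' bids `b` (buyers indexed
`1,…,N`) and sellers' asks `s` (sellers indexed `1,…,M`), it is the maximum over prices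
`p ∈ ℝ` of `min(#{i : b i ≥ p}, #{j : s j ≤ p})`. -/
noncomputable def breakEven (N M : ℕ) (b s : ℕ → ℝ) : ℕ :=
  sSup {k : ℕ | ∃ p : ℝ,
    k = min (((Finset.Icc 1 N).filter fun i => p ≤ b i).card)
            (((Finset.Icc 1 M).filter fun j => s j ≤ p).card)}

/-- Sorted-index characterization of the break-even count: if `σ` sorts
the buyers' bids in descending order and `τ` sorts the sellers' asks in ascending order,
then `breakEven N M b s` is the largest `k ∈ {1,…,min(M,N)}` with `b (σ k) ≥ s (τ k)`
when such a `k` exists, and `0` otherwise. -/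
theorem stmt_1 (N M : ℕ) (hN : 0 < N) (hM : 0 < M)
    (b s : ℕ → ℝ) (σ τ : ℕ → ℕ)
    (hσ : Set.BijOn σ (Set.Icc 1 N) (Set.Icc 1 N))
    (hτ : Set.BijOn τ (Set.Icc 1 M) (Set.Icc 1 M))
    (hbsort : ∀ k k', 1 ≤ k → k ≤ k' → k' ≤ N → b (σ k') ≤ b (σ k))
    (hssort : ∀ k k', 1 ≤ k → k ≤ k' → k' ≤ M → s (τ k) ≤ s (τ k')) :
    ({k : ℕ | 1 ≤ k ∧ k ≤ min M N ∧ s (τ k) ≤ b (σ k)}.Nonempty →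
      IsGreatest {k : ℕ | 1 ≤ k ∧ k ≤ min M N ∧ s (τ k) ≤ b (σ k)} (breakEven N M b s)) ∧
    ({k : ℕ | 1 ≤ k ∧ k ≤ min M N ∧ s (τ k) ≤ b (σ k)} = ∅ →
      breakEven N M b s = 0) := by
  classical
  set A : ℝ → ℕ := fun p => ((Finset.Icc 1 N).filter fun i => p ≤ b i).card with hA
  set B : ℝ → ℕ := fun p => ((Finset.Icc 1 M).filter fun j => s j ≤ p).card with hB
  set S : Set ℕ := {k : ℕ | ∃ p : ℝ, k = min (A p) (B p)} with hS
  have hBE : breakEven N M b s = sSup S := rfl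
  have hAle : ∀ p, A p ≤ N := by
    intro p
    calc A p ≤ (Finset.Icc 1 N).card := Finset.card_filter_le _ _
      _ = N := by rw [Nat.card_Icc]; omega
  have hBle : ∀ p, B p ≤ M := by
    intro p
    calc B p ≤ (Finset.Icc 1 M).card := Finset.card_filter_le _ _
      _ = M := by rw [Nat.card_Icc]; omega
  have hSne : S.Nonempty := ⟨min (A 0) (B 0), 0, rfl⟩
  have hSbdd : BddAbove S := by
    refine ⟨N, fun k hk => ?_⟩
    obtain ⟨p, rfl⟩ := hk
    exact le_trans (min_le_left _ _) (hAle p)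
  -- every positive element of S is in the good set
  have key_up : ∀ m ∈ S, 1 ≤ m → (1 ≤ m ∧ m ≤ min M N ∧ s (τ m) ≤ b (σ m)) := by
    intro m hm hm1
    obtain ⟨p, rfl⟩ := hm
    set m := min (A p) (B p)
    have hmA : m ≤ A p := min_le_left _ _
    have hmB : m ≤ B p := min_le_right _ _
    obtain ⟨k, hmk, hkN, hpk⟩ := aux_exists_ge N m hm1 σ hσ (fun i => p ≤ b i) hmA
    obtain ⟨k', hmk', hk'M, hpk'⟩ := aux_exists_ge M m hm1 τ hτ (fun j => s j ≤ p) hmB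
    refine ⟨hm1, le_min (le_trans hmB (hBle p)) (le_trans hmA (hAle p)), ?_⟩
    calc s (τ m) ≤ s (τ k') := hssort m k' hm1 hmk' hk'M
      _ ≤ p := hpk'
      _ ≤ b (σ k) := hpk
      _ ≤ b (σ m) := hbsort m k hm1 hmk hkN
  -- every good k is dominated by an element of S
  have key_mem : ∀ k, 1 ≤ k → k ≤ min M N → s (τ k) ≤ b (σ k) → ∃ m ∈ S, k ≤ m := by
    intro k hk1 hkmn hks
    have hkN : k ≤ N := le_trans hkmn (min_le_right _ _)
    have hkM : k ≤ M := le_trans hkmn (min_le_left _ _)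
    set p := b (σ k) with hp
    have hAk : k ≤ A p := by
      apply aux_card_ge N k hk1 hkN σ hσ (fun i => p ≤ b i)
      intro i hi1 hik
      exact hbsort i k hi1 hik hkN
    have hBk : k ≤ B p := by
      apply aux_card_ge M k hk1 hkM τ hτ (fun j => s j ≤ p)
      intro i hi1 hik
      exact le_trans (hssort i k hi1 hik hkM) hks
    exact ⟨min (A p) (B p), ⟨p, rfl⟩, le_min hAk hBk⟩
  rw [hBE]
  have hmemS : sSup S ∈ S := Nat.sSup_mem hSne hSbdd
  constructor
  · rintro ⟨k0, hk01, hk0m, hk0s⟩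
    obtain ⟨m, hmS, hk0le⟩ := key_mem k0 hk01 hk0m hk0s
    have hle : m ≤ sSup S := le_csSup hSbdd hmS
    have h1 : 1 ≤ sSup S := le_trans hk01 (le_trans hk0le hle)
    refine ⟨key_up _ hmemS h1, ?_⟩
    rintro k ⟨hk1, hkm, hks⟩
    obtain ⟨m', hm'S, hkm'⟩ := key_mem k hk1 hkm hks
    exact le_trans hkm' (le_csSup hSbdd hm'S)
  · intro hempty
    by_contra h0
    have h1 : 1 ≤ sSup S := Nat.one_le_iff_ne_zero.2 h0
    have := key_up _ hmemS h1
    have : sSup S ∈ ({k : ℕ | 1 ≤ k ∧ k ≤ min M N ∧ s (τ k) ≤ b (σ k)}) := this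
    rw [hempty] at this
    exact this
end

section
/- At least K* trades occur under confidence-bound bidding (Proposition 1): suppose at some round t ≥ 1 every buyer i ∈ {1,…,N} bids b_i = b̂_i + √(α_{b,i}·log t / n_{b,i}) where n_{b,i} ≥ 1 is an integer, |b̂_i − B_i| ≤ √(β·log t / n_{b,i}) and α_{b,i} ≥ β ≥ 0, and every seller j ∈ {1,…,M} asks s_j = ŝ_j − √(α_{s,j}·log t / n_{s,j}) where n_{s,j} ≥ 1 is an integer, |ŝ_j − S_j| ≤ √(β·log t / n_{s,j}) and α_{s,j} ≥ β. Then the break-even count of the submitted bids satisfies K(b, s) ≥ K*. -/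
/-- `K*`: the largest `k ≤ min(M,N)` with `B k ≥ S k` (valuations sorted, `1`-indexed),
and `0` if no such `k` exists (`sSup ∅ = 0` in `ℕ`). -/
noncomputable def Kstar (N M : ℕ) (B S : ℕ → ℝ) : ℕ :=
  sSup {k : ℕ | 1 ≤ k ∧ k ≤ min M N ∧ S k ≤ B k}

/-- At least `K*` trades occur under confidence-bound bidding: if every
buyer bids the UCB of her valuation and every seller asks the LCB of her valuation, each
with exploration parameter at least `β` and empirical estimates within the `β`-confidence
width of the truth, then the break-even count of the submitted bids is at least `K*`. -/
theorem stmt_3 (N M : ℕ) (hN : 0 < N) (hM : 0 < M)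
    (B S : ℕ → ℝ)
    (hBsort : ∀ i i', 1 ≤ i → i ≤ i' → i' ≤ N → B i' ≤ B i)
    (hSsort : ∀ j j', 1 ≤ j → j ≤ j' → j' ≤ M → S j ≤ S j')
    (t : ℕ) (ht : 1 ≤ t) (β : ℝ) (hβ : 0 ≤ β)
    (αb αs : ℕ → ℝ) (nb ns : ℕ → ℕ) (bhat shat b s : ℕ → ℝ)
    (hαb : ∀ i ∈ Finset.Icc 1 N, β ≤ αb i)
    (hαs : ∀ j ∈ Finset.Icc 1 M, β ≤ αs j)
    (hnb : ∀ i ∈ Finset.Icc 1 N, 1 ≤ nb i)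
    (hns : ∀ j ∈ Finset.Icc 1 M, 1 ≤ ns j)
    (hconfb : ∀ i ∈ Finset.Icc 1 N, |bhat i - B i| ≤ Real.sqrt (β * Real.log t / nb i))
    (hconfs : ∀ j ∈ Finset.Icc 1 M, |shat j - S j| ≤ Real.sqrt (β * Real.log t / ns j))
    (hbid : ∀ i ∈ Finset.Icc 1 N, b i = bhat i + Real.sqrt (αb i * Real.log t / nb i))
    (hask : ∀ j ∈ Finset.Icc 1 M, s j = shat j - Real.sqrt (αs j * Real.log t / ns j)) :
    Kstar N M B S ≤ breakEven N M b s := by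

  have hlog : (0:ℝ) ≤ Real.log t := Real.log_nonneg (by exact_mod_cast ht)
  by_cases hT : {k : ℕ | 1 ≤ k ∧ k ≤ min M N ∧ S k ≤ B k}.Nonempty
  · have hbdd : BddAbove {k : ℕ | 1 ≤ k ∧ k ≤ min M N ∧ S k ≤ B k} :=
      ⟨min M N, fun k hk => hk.2.1⟩
    have hmem : Kstar N M B S ∈ {k : ℕ | 1 ≤ k ∧ k ≤ min M N ∧ S k ≤ B k} :=
      Nat.sSup_mem hT hbdd
    set k := Kstar N M B S with hkdef
    obtain ⟨hk1, hk2, hk3⟩ := hmem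
    have hkN : k ≤ N := le_trans hk2 (min_le_right _ _)
    have hkM : k ≤ M := le_trans hk2 (min_le_left _ _)
    -- bids are above valuations, asks below
    have hb : ∀ i ∈ Finset.Icc 1 N, B i ≤ b i := by
      intro i hi
      rw [hbid i hi]
      have h1 : B i - bhat i ≤ Real.sqrt (β * Real.log t / nb i) :=
        le_trans (abs_sub_comm (bhat i) (B i) ▸ le_abs_self _) (hconfb i hi)
      have h2 : Real.sqrt (β * Real.log t / nb i) ≤ Real.sqrt (αb i * Real.log t / nb i) := by
        apply Real.sqrt_le_sqrt
        have hpos : (0:ℝ) < nb i := by exact_mod_cast hnb i hi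
        gcongr
        exact hαb i hi
      linarith
    have hs : ∀ j ∈ Finset.Icc 1 M, s j ≤ S j := by
      intro j hj
      rw [hask j hj]
      have h1 : shat j - S j ≤ Real.sqrt (β * Real.log t / ns j) :=
        le_trans (le_abs_self _) (hconfs j hj)
      have h2 : Real.sqrt (β * Real.log t / ns j) ≤ Real.sqrt (αs j * Real.log t / ns j) := by
        apply Real.sqrt_le_sqrt
        have hpos : (0:ℝ) < ns j := by exact_mod_cast hns j hj
        gcongr
        exact hαs j hj
      linarith
    -- at price p = S k, at least k buyers and k sellers trade
    set p := S k with hp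
    set m := min (((Finset.Icc 1 N).filter fun i => p ≤ b i).card)
                 (((Finset.Icc 1 M).filter fun j => s j ≤ p).card) with hm
    have hsub1 : Finset.Icc 1 k ⊆ (Finset.Icc 1 N).filter fun i => p ≤ b i := by
      intro i hi
      rw [Finset.mem_Icc] at hi
      rw [Finset.mem_filter]
      have hiN : i ∈ Finset.Icc 1 N := Finset.mem_Icc.mpr ⟨hi.1, le_trans hi.2 hkN⟩
      refine ⟨hiN, ?_⟩
      have : B k ≤ B i := hBsort i k hi.1 hi.2 hkN
      have := hb i hiN
      linarith
    have hsub2 : Finset.Icc 1 k ⊆ (Finset.Icc 1 M).filter fun j => s j ≤ p := by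
      intro j hj
      rw [Finset.mem_Icc] at hj
      rw [Finset.mem_filter]
      have hjM : j ∈ Finset.Icc 1 M := Finset.mem_Icc.mpr ⟨hj.1, le_trans hj.2 hkM⟩
      refine ⟨hjM, ?_⟩
      have : S j ≤ S k := hSsort j k hj.1 hj.2 hkM
      have := hs j hjM
      linarith
    have hcard : (Finset.Icc 1 k).card = k := by simp
    have hkm : k ≤ m := by
      rw [hm]
      exact le_min (hcard ▸ Finset.card_le_card hsub1) (hcard ▸ Finset.card_le_card hsub2)
    have hbddBE : BddAbove {k : ℕ | ∃ p : ℝ,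
        k = min (((Finset.Icc 1 N).filter fun i => p ≤ b i).card)
                (((Finset.Icc 1 M).filter fun j => s j ≤ p).card)} := by
      refine ⟨N, fun x hx => ?_⟩
      obtain ⟨q, hq⟩ := hx
      calc x ≤ ((Finset.Icc 1 N).filter fun i => q ≤ b i).card := hq ▸ min_le_left _ _
        _ ≤ (Finset.Icc 1 N).card := Finset.card_filter_le _ _
        _ ≤ N := by simp
    have hmmem : m ∈ {k : ℕ | ∃ p : ℝ,
        k = min (((Finset.Icc 1 N).filter fun i => p ≤ b i).card)
                (((Finset.Icc 1 M).filter fun j => s j ≤ p).card)} := ⟨p, hm⟩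
    exact le_trans hkm (le_csSup hbddBE hmmem)
  · rw [Kstar, Set.not_nonempty_iff_eq_empty.mp hT]
    simp
end

section
/- A well-sampled low-value buyer never precedes a high-value buyer (buyer part of Lemma 3): let B_i < B_{i'} be the valuations of two buyers, let β ≥ 0 and α_i > β, α_{i'} > β be reals, let t ≥ 2 be an integer and n_i, n_{i'} ≥ 1 integers, and suppose the empirical estimates satisfy |b̂_i − B_i| ≤ √(β·log t / n_i) and |b̂_{i'} − B_{i'}| ≤ √(β·log t / n_{i'}). If n_i ≥ (√α_i + √β)²·log t / (B_{i'} − B_i)², then the UCB bids satisfy b̂_i + √(α_i·log t / n_i) ≤ B_{i'} < b̂_{i'} + √(α_{i'}·log t / n_{i'}). Consequently, for any set P of buyers with the property that every member's bid is greater than or equal to every non-member's bid (bids being these UCB indices), i ∈ P implies i' ∈ P. -/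
/-- A well-sampled low-value buyer never precedes a high-value buyer:
under the confidence event, if buyer `i` (with valuation `Bi < Bi'`) has at least
`(√αi + √β)²·log t / (Bi' − Bi)²` samples, then her UCB bid is at most `Bi'`, which is
strictly below buyer `i'`'s UCB bid; consequently, for any set `P` of buyers in which
every member's bid is at least every non-member's bid, `i ∈ P` implies `i' ∈ P`. -/
theorem stmt_5 {ι : Type*} (bid : ι → ℝ) (i i' : ι)
    (Bi Bi' : ℝ) (hBB : Bi < Bi')
    (β αi αi' : ℝ) (hβ : 0 ≤ β) (hαi : β < αi) (hαi' : β < αi')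
    (t : ℕ) (ht : 2 ≤ t) (ni ni' : ℕ) (hni : 1 ≤ ni) (hni' : 1 ≤ ni')
    (bhati bhati' : ℝ)
    (hconfi : |bhati - Bi| ≤ Real.sqrt (β * Real.log t / ni))
    (hconfi' : |bhati' - Bi'| ≤ Real.sqrt (β * Real.log t / ni'))
    (hbidi : bid i = bhati + Real.sqrt (αi * Real.log t / ni))
    (hbidi' : bid i' = bhati' + Real.sqrt (αi' * Real.log t / ni'))
    (hsamples : (Real.sqrt αi + Real.sqrt β) ^ 2 * Real.log t / (Bi' - Bi) ^ 2 ≤ (ni : ℝ)) :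
    bid i ≤ Bi' ∧ Bi' < bid i' ∧
    (∀ P : Set ι, (∀ a ∈ P, ∀ c ∉ P, bid c ≤ bid a) → i ∈ P → i' ∈ P) := by

  have htR : (2:ℝ) ≤ (t:ℝ) := by exact_mod_cast ht
  have hL : 0 < Real.log t := Real.log_pos (by linarith)
  have hniR : (0:ℝ) < (ni:ℝ) := by exact_mod_cast hni
  have hni'R : (0:ℝ) < (ni':ℝ) := by exact_mod_cast hni'
  have hLni : 0 < Real.log t / ni := div_pos hL hniR
  have hLni' : 0 < Real.log t / ni' := div_pos hL hni'R
  have hαi0 : 0 ≤ αi := le_trans hβ hαi.le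
  have hαi'0 : 0 ≤ αi' := le_trans hβ hαi'.le
  have e1 : Real.sqrt (β * Real.log t / ni) = Real.sqrt β * Real.sqrt (Real.log t / ni) := by
    rw [mul_div_assoc, Real.sqrt_mul hβ]
  have e2 : Real.sqrt (αi * Real.log t / ni) = Real.sqrt αi * Real.sqrt (Real.log t / ni) := by
    rw [mul_div_assoc, Real.sqrt_mul hαi0]
  have e3 : Real.sqrt (β * Real.log t / ni') = Real.sqrt β * Real.sqrt (Real.log t / ni') := by
    rw [mul_div_assoc, Real.sqrt_mul hβ]
  have e4 : Real.sqrt (αi' * Real.log t / ni') = Real.sqrt αi' * Real.sqrt (Real.log t / ni') := by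
    rw [mul_div_assoc, Real.sqrt_mul hαi'0]
  have h1 : (Real.sqrt αi + Real.sqrt β)^2 * Real.log t ≤ (ni:ℝ) * (Bi'-Bi)^2 := by
    have hD : (0:ℝ) < (Bi' - Bi)^2 := pow_pos (by linarith) 2
    have := (div_le_iff₀ hD).mp hsamples
    linarith
  have key : ((Real.sqrt αi + Real.sqrt β) * Real.sqrt (Real.log t / ni))^2 ≤ (Bi' - Bi)^2 := by
    rw [mul_pow, Real.sq_sqrt hLni.le]
    have heq : (Real.sqrt αi + Real.sqrt β)^2 * (Real.log t / ni)
        = (Real.sqrt αi + Real.sqrt β)^2 * Real.log t / ni := by ring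
    rw [heq, div_le_iff₀ hniR]
    nlinarith [h1]
  have hsq : (Real.sqrt αi + Real.sqrt β) * Real.sqrt (Real.log t / ni) ≤ Bi' - Bi := by
    have h2 := Real.sqrt_le_sqrt key
    rwa [Real.sqrt_sq (by positivity), Real.sqrt_sq (by linarith)] at h2
  rw [add_mul] at hsq
  rw [e1] at hconfi
  rw [e3] at hconfi'
  have hb1 : bid i ≤ Bi' := by
    have h2 := (abs_le.mp hconfi).2
    rw [hbidi, e2]; linarith
  have hb2 : Bi' < bid i' := by
    have h2 := (abs_le.mp hconfi').1
    have hs' : 0 < Real.sqrt (Real.log t / ni') := Real.sqrt_pos.mpr hLni'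
    have hlt : Real.sqrt β < Real.sqrt αi' := Real.sqrt_lt_sqrt hβ hαi'
    have hmul : Real.sqrt β * Real.sqrt (Real.log t / ni') < Real.sqrt αi' * Real.sqrt (Real.log t / ni') :=
      mul_lt_mul_of_pos_right hlt hs'
    rw [hbidi', e4]
    linarith
  refine ⟨hb1, hb2, fun P hP hiP => ?_⟩
  by_contra hcon
  have := hP i hiP i' hcon
  linarith
end

section
/- A well-sampled high-value seller never precedes a low-value seller (seller part of Lemma 3): let S_{j'} < S_j be the valuations of two sellers, let β ≥ 0 and α_j > β, α_{j'} > β be reals, let t ≥ 2 be an integer and n_j, n_{j'} ≥ 1 integers, and suppose the empirical estimates satisfy |ŝ_j − S_j| ≤ √(β·log t / n_j) and |ŝ_{j'} − S_{j'}| ≤ √(β·log t / n_{j'}). If n_j ≥ (√α_j + √β)²·log t / (S_j − S_{j'})², then the LCB asks satisfy ŝ_j − √(α_j·log t / n_j) ≥ S_{j'} > ŝ_{j'} − √(α_{j'}·log t / n_{j'}). Consequently, for any set Q of sellers with the property that every member's ask is less than or equal to every non-member's ask (asks being these LCB indices), j ∈ Q implies j' ∈ Q. -/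
/-- A well-sampled high-value seller never precedes a low-value seller:
under the confidence event, if seller `j` (with valuation `Sj > Sj'`) has at least
`(√αj + √β)²·log t / (Sj − Sj')²` samples, then her LCB ask is at least `Sj'`, which is
strictly above seller `j'`'s LCB ask; consequently, for any set `Q` of sellers in which
every member's ask is at most every non-member's ask, `j ∈ Q` implies `j' ∈ Q`. -/
theorem stmt_6 {ι : Type*} (ask : ι → ℝ) (j j' : ι)
    (Sj Sj' : ℝ) (hSS : Sj' < Sj)
    (β αj αj' : ℝ) (hβ : 0 ≤ β) (hαj : β < αj) (hαj' : β < αj')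
    (t : ℕ) (ht : 2 ≤ t) (nj nj' : ℕ) (hnj : 1 ≤ nj) (hnj' : 1 ≤ nj')
    (shatj shatj' : ℝ)
    (hconfj : |shatj - Sj| ≤ Real.sqrt (β * Real.log t / nj))
    (hconfj' : |shatj' - Sj'| ≤ Real.sqrt (β * Real.log t / nj'))
    (haskj : ask j = shatj - Real.sqrt (αj * Real.log t / nj))
    (haskj' : ask j' = shatj' - Real.sqrt (αj' * Real.log t / nj'))
    (hsamples : (Real.sqrt αj + Real.sqrt β) ^ 2 * Real.log t / (Sj - Sj') ^ 2 ≤ (nj : ℝ)) :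
    Sj' ≤ ask j ∧ ask j' < Sj' ∧
    (∀ Q : Set ι, (∀ a ∈ Q, ∀ c ∉ Q, ask a ≤ ask c) → j ∈ Q → j' ∈ Q) := by
  have hL : 0 < Real.log t := Real.log_pos (by exact_mod_cast lt_of_lt_of_le one_lt_two ht)
  set L := Real.log t with hLdef
  have hnjpos : (0:ℝ) < nj := by exact_mod_cast hnj
  have hnj'pos : (0:ℝ) < nj' := by exact_mod_cast hnj'
  have hαjpos : 0 < αj := lt_of_le_of_lt hβ hαj
  have h2 : ask j' < Sj' := by
    have h1 : shatj' - Sj' ≤ Real.sqrt (β * L / nj') := (abs_le.mp hconfj').2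
    have hlt : Real.sqrt (β * L / nj') < Real.sqrt (αj' * L / nj') := by
      apply Real.sqrt_lt_sqrt (by positivity)
      exact (div_lt_div_iff_of_pos_right hnj'pos).mpr (mul_lt_mul_of_pos_right hαj' hL)
    rw [haskj']; linarith
  have key : Real.sqrt (β * L / nj) + Real.sqrt (αj * L / nj) ≤ Sj - Sj' := by
    have hsq : Real.sqrt (β * L / nj) + Real.sqrt (αj * L / nj)
        = (Real.sqrt αj + Real.sqrt β) * Real.sqrt (L / nj) := by
      rw [mul_div_assoc, mul_div_assoc, Real.sqrt_mul hβ, Real.sqrt_mul hαjpos.le, add_mul]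
      ring
    rw [hsq]
    have h3 : (Real.sqrt αj + Real.sqrt β) ^ 2 * (L / nj) ≤ (Sj - Sj') ^ 2 := by
      have h4 := (div_le_iff₀ (pow_pos (sub_pos.mpr hSS) 2)).mp hsamples
      rw [← mul_div_assoc]
      exact (div_le_iff₀ hnjpos).mpr (by nlinarith)
    calc (Real.sqrt αj + Real.sqrt β) * Real.sqrt (L / nj)
        = Real.sqrt ((Real.sqrt αj + Real.sqrt β) ^ 2 * (L / nj)) := by
          rw [Real.sqrt_mul (by positivity), Real.sqrt_sq (by positivity)]
      _ ≤ Real.sqrt ((Sj - Sj') ^ 2) := Real.sqrt_le_sqrt h3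
      _ = Sj - Sj' := Real.sqrt_sq (by linarith)
  have h1 : Sj' ≤ ask j := by
    have hlb : Sj - shatj ≤ Real.sqrt (β * L / nj) := by
      have := (abs_le.mp hconfj).1; linarith
    rw [haskj]; linarith
  refine ⟨h1, h2, fun Q hQ hjQ => ?_⟩
  by_contra hj'Q
  have := hQ j hjQ j' hj'Q
  linarith
end

section
/- Counting the missed rounds of an optimal participant (combinatorial core of Lemma 8): let T ≥ 1, N ≥ 1 and 1 ≤ K* ≤ N be integers. For each round t ∈ {1,…,T} let P(t) ⊆ {1,…,N} satisfy |P(t)| ≥ K*, and for each index i' set n_{i'}(t) := #{t' ≤ t : i' ∈ P(t')}. Fix i ∈ {1,…,K*} and nonnegative reals Th_{i'} for each i' ∈ {K*+1,…,N}, and assume that for every round t ∈ {1,…,T} and every i' ∈ {K*+1,…,N}, if i ∉ P(t) and i' ∈ P(t) then n_{i'}(t) ≤ Th_{i'}. Then T − n_i(T) ≤ Σ_{i'=K*+1}^{N} Th_{i'}. -/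
/-- Counting the missed rounds of an optimal participant: if every round
has at least `Kstar` participants (out of agents `1,…,N`), and whenever the optimal agent
`i ≤ Kstar` is absent while a non-optimal agent `i' > Kstar` is present the participation
counter of `i'` is at most `Th i'`, then the number of rounds missed by `i` is at most
`Σ_{i' = Kstar+1}^{N} Th i'`. -/
theorem stmt_7 (T N Kstar : ℕ) (hT : 1 ≤ T) (hN : 1 ≤ N)
    (hK1 : 1 ≤ Kstar) (hK2 : Kstar ≤ N)
    (P : ℕ → Finset ℕ)
    (hPsub : ∀ t ∈ Finset.Icc 1 T, P t ⊆ Finset.Icc 1 N)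
    (hPcard : ∀ t ∈ Finset.Icc 1 T, Kstar ≤ (P t).card)
    (i : ℕ) (hi : i ∈ Finset.Icc 1 Kstar)
    (Th : ℕ → ℝ) (hTh : ∀ i' ∈ Finset.Icc (Kstar + 1) N, 0 ≤ Th i')
    (hmain : ∀ t ∈ Finset.Icc 1 T, ∀ i' ∈ Finset.Icc (Kstar + 1) N,
      i ∉ P t → i' ∈ P t →
      ((((Finset.Icc 1 t).filter fun t' => i' ∈ P t').card : ℝ) ≤ Th i')) :
    (T : ℝ) - (((Finset.Icc 1 T).filter fun t => i ∈ P t).card : ℝ)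
      ≤ ∑ i' ∈ Finset.Icc (Kstar + 1) N, Th i' := by
  classical
  set M : Finset ℕ := (Finset.Icc 1 T).filter (fun t => i ∉ P t) with hM
  have hsplit : ((Finset.Icc 1 T).filter fun t => i ∈ P t).card + M.card = T := by
    rw [hM, Finset.card_filter_add_card_filter_not]
    simp
  have hTM : (T : ℝ) - (((Finset.Icc 1 T).filter fun t => i ∈ P t).card : ℝ) = (M.card : ℝ) := by
    have h : (((Finset.Icc 1 T).filter fun t => i ∈ P t).card : ℝ) + (M.card : ℝ) = (T : ℝ) := by
      exact_mod_cast hsplit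
    linarith
  rw [hTM]
  have hper : ∀ i' ∈ Finset.Icc (Kstar + 1) N,
      ((M.filter fun t => i' ∈ P t).card : ℝ) ≤ Th i' := by
    intro i' hi'
    by_cases hne : (M.filter fun t => i' ∈ P t).Nonempty
    · obtain ⟨t0, ht0mem, ht0max⟩ := Finset.exists_max_image _ id hne
      have ht0 := Finset.mem_filter.mp ht0mem
      have ht0M := Finset.mem_filter.mp ht0.1
      have hsub : (M.filter fun t => i' ∈ P t) ⊆ (Finset.Icc 1 t0).filter fun t' => i' ∈ P t' := by
        intro t ht
        have h1 := Finset.mem_filter.mp ht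
        have h2 := Finset.mem_filter.mp h1.1
        refine Finset.mem_filter.mpr ⟨?_, h1.2⟩
        have := Finset.mem_Icc.mp h2.1
        exact Finset.mem_Icc.mpr ⟨this.1, ht0max t ht⟩
      calc ((M.filter fun t => i' ∈ P t).card : ℝ)
          ≤ (((Finset.Icc 1 t0).filter fun t' => i' ∈ P t').card : ℝ) := by
            exact_mod_cast Finset.card_le_card hsub
        _ ≤ Th i' := hmain t0 ht0M.1 i' hi' ht0M.2 ht0.2
    · rw [Finset.not_nonempty_iff_eq_empty.mp hne]
      simpa using hTh i' hi'
  have hcover : M ⊆ (Finset.Icc (Kstar + 1) N).biUnion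
      (fun i' => M.filter fun t => i' ∈ P t) := by
    intro t ht
    have htM := Finset.mem_filter.mp ht
    have hPt : ¬ (P t ⊆ Finset.Icc 1 Kstar) := by
      intro hsub
      have hcard : (P t).card ≤ (Finset.Icc 1 Kstar \ {i}).card := by
        apply Finset.card_le_card
        intro x hx
        exact Finset.mem_sdiff.mpr ⟨hsub hx, by
          simp only [Finset.mem_singleton]
          rintro rfl
          exact htM.2 hx⟩
      have hc2 : (Finset.Icc 1 Kstar \ {i}).card = Kstar - 1 := by
        rw [Finset.card_sdiff_of_subset (by simpa using hi)]
        simp [Nat.card_Icc]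
      have hc3 := hPcard t htM.1
      omega
    obtain ⟨x, hxP, hxK⟩ := Finset.not_subset.mp hPt
    have hxN := Finset.mem_Icc.mp (hPsub t htM.1 hxP)
    have hx' : x ∈ Finset.Icc (Kstar + 1) N := by
      rw [Finset.mem_Icc] at hxK ⊢
      omega
    exact Finset.mem_biUnion.mpr ⟨x, hx', Finset.mem_filter.mpr ⟨ht, hxP⟩⟩
  calc (M.card : ℝ)
      ≤ (((Finset.Icc (Kstar + 1) N).biUnion (fun i' => M.filter fun t => i' ∈ P t)).card : ℝ) := by
        exact_mod_cast Finset.card_le_card hcover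
    _ ≤ ∑ i' ∈ Finset.Icc (Kstar + 1) N, ((M.filter fun t => i' ∈ P t).card : ℝ) := by
        exact_mod_cast Finset.card_biUnion_le
    _ ≤ ∑ i' ∈ Finset.Icc (Kstar + 1) N, Th i' := Finset.sum_le_sum hper
end

section
/- Participation bound for a non-optimal buyer (second part of Lemma 9): let T, N, M ≥ 1 and 0 ≤ K* ≤ M be integers, and for each round t ∈ {1,…,T} let P_b(t) ⊆ {1,…,N} and P_s(t) ⊆ {1,…,M} with counters n_{b,i}(t) := #{t' ≤ t : i ∈ P_b(t')} and n_{s,j}(t) := #{t' ≤ t : j ∈ P_s(t')}. Fix a buyer i, a nonnegative real Th_i, and nonnegative reals Th_{i,j'} for each seller j' ∈ {K*+1,…,M}. Assume that for every round t with i ∈ P_b(t), either n_{b,i}(t) ≤ Th_i, or there exists a seller j' ∈ {K*+1,…,M} with j' ∈ P_s(t) and n_{s,j'}(t) ≤ Th_{i,j'}. Then n_{b,i}(T) ≤ Th_i + Σ_{j'=K*+1}^{M} Th_{i,j'}. -/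
/-- Auxiliary counting lemma: if every element `t` of `A` satisfies `Q` and lies in
`[1,T]`, and for each `t ∈ A` the number of `t' ∈ [1,t]` satisfying `Q` is at most `c`,
then `|A| ≤ c`. -/
lemma stmt_9_aux (T : ℕ) (Q : ℕ → Prop) [DecidablePred Q] (c : ℝ) (hc : 0 ≤ c)
    (A : Finset ℕ) (hA : A ⊆ (Finset.Icc 1 T).filter Q)
    (h : ∀ t ∈ A, (((Finset.Icc 1 t).filter Q).card : ℝ) ≤ c) : (A.card : ℝ) ≤ c := by
  rcases A.eq_empty_or_nonempty with rfl | hne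
  · simpa using hc
  · set t0 := A.max' hne with ht0
    have ht0A : t0 ∈ A := A.max'_mem hne
    have hsub : A ⊆ (Finset.Icc 1 t0).filter Q := by
      intro a ha
      have := hA ha
      simp only [Finset.mem_filter, Finset.mem_Icc] at this ⊢
      exact ⟨⟨this.1.1, A.le_max' a ha⟩, this.2⟩
    calc (A.card : ℝ) ≤ (((Finset.Icc 1 t0).filter Q).card : ℝ) := by
          exact_mod_cast Finset.card_le_card hsub
      _ ≤ c := h t0 ht0A

/-- Participation bound for a non-optimal buyer: if in every round in
which buyer `i` participates either its own counter is at most `Thi`, or some optimal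
non-participating seller `j' ∈ {Kstar+1,…,M}` participates with counter at most
`Th j'`, then the total number of participations of buyer `i` is at most
`Thi + Σ_{j' = Kstar+1}^{M} Th j'`. -/
theorem stmt_9 (T N M Kstar : ℕ) (hT : 1 ≤ T) (hN : 1 ≤ N) (hM : 1 ≤ M) (hK : Kstar ≤ M)
    (Pb Ps : ℕ → Finset ℕ)
    (hPb : ∀ t ∈ Finset.Icc 1 T, Pb t ⊆ Finset.Icc 1 N)
    (hPs : ∀ t ∈ Finset.Icc 1 T, Ps t ⊆ Finset.Icc 1 M)
    (i : ℕ) (Thi : ℝ) (hThi : 0 ≤ Thi)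
    (Th : ℕ → ℝ) (hTh : ∀ j' ∈ Finset.Icc (Kstar + 1) M, 0 ≤ Th j')
    (hmain : ∀ t ∈ Finset.Icc 1 T, i ∈ Pb t →
      ((((Finset.Icc 1 t).filter fun t' => i ∈ Pb t').card : ℝ) ≤ Thi) ∨
      ∃ j' ∈ Finset.Icc (Kstar + 1) M, j' ∈ Ps t ∧
        (((Finset.Icc 1 t).filter fun t' => j' ∈ Ps t').card : ℝ) ≤ Th j') :
    (((Finset.Icc 1 T).filter fun t => i ∈ Pb t).card : ℝ)
      ≤ Thi + ∑ j' ∈ Finset.Icc (Kstar + 1) M, Th j' := by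
  classical
  set S := (Finset.Icc 1 T).filter fun t => i ∈ Pb t with hS
  set A := S.filter fun t => (((Finset.Icc 1 t).filter fun t' => i ∈ Pb t').card : ℝ) ≤ Thi
    with hA
  set B := fun j' => S.filter fun t => j' ∈ Ps t ∧
      (((Finset.Icc 1 t).filter fun t' => j' ∈ Ps t').card : ℝ) ≤ Th j' with hB
  have hcover : S ⊆ A ∪ (Finset.Icc (Kstar + 1) M).biUnion B := by
    intro t ht
    have htI : t ∈ Finset.Icc 1 T := (Finset.mem_filter.mp ht).1
    have htP : i ∈ Pb t := (Finset.mem_filter.mp ht).2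
    rcases hmain t htI htP with h | ⟨j', hj', hj'P, hj'c⟩
    · exact Finset.mem_union_left _ (Finset.mem_filter.mpr ⟨ht, h⟩)
    · exact Finset.mem_union_right _ (Finset.mem_biUnion.mpr
        ⟨j', hj', Finset.mem_filter.mpr ⟨ht, hj'P, hj'c⟩⟩)
  have hcard : S.card ≤ A.card + ∑ j' ∈ Finset.Icc (Kstar + 1) M, (B j').card := by
    calc S.card ≤ (A ∪ (Finset.Icc (Kstar + 1) M).biUnion B).card :=
          Finset.card_le_card hcover
      _ ≤ A.card + ((Finset.Icc (Kstar + 1) M).biUnion B).card := Finset.card_union_le _ _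
      _ ≤ A.card + ∑ j' ∈ Finset.Icc (Kstar + 1) M, (B j').card := by
          exact Nat.add_le_add_left (Finset.card_biUnion_le) _
  have hAc : (A.card : ℝ) ≤ Thi := by
    apply stmt_9_aux T (fun t' => i ∈ Pb t') Thi hThi
    · intro a ha
      exact (Finset.mem_filter.mp ha).1
    · intro t ht
      exact (Finset.mem_filter.mp ht).2
  have hBc : ∀ j' ∈ Finset.Icc (Kstar + 1) M, ((B j').card : ℝ) ≤ Th j' := by
    intro j' hj'
    apply stmt_9_aux T (fun t' => j' ∈ Ps t') (Th j') (hTh j' hj')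
    · intro a ha
      have h1 := (Finset.mem_filter.mp ha).1
      have h2 := (Finset.mem_filter.mp ha).2
      exact Finset.mem_filter.mpr ⟨(Finset.mem_filter.mp h1).1, h2.1⟩
    · intro t ht
      exact ((Finset.mem_filter.mp ht).2).2
  calc (S.card : ℝ) ≤ (A.card : ℝ) + ∑ j' ∈ Finset.Icc (Kstar + 1) M, ((B j').card : ℝ) := by
        exact_mod_cast hcard
    _ ≤ Thi + ∑ j' ∈ Finset.Icc (Kstar + 1) M, Th j' :=
        add_le_add hAc (Finset.sum_le_sum hBc)
end

section
/- Participation bound for a non-optimal seller (third part of Lemma 9): let T, N, M ≥ 1 and 0 ≤ K* ≤ N be integers, and for each round t ∈ {1,…,T} let P_b(t) ⊆ {1,…,N} and P_s(t) ⊆ {1,…,M} with counters n_{b,i}(t) := #{t' ≤ t : i ∈ P_b(t')} and n_{s,j}(t) := #{t' ≤ t : j ∈ P_s(t')}. Fix a seller j, a nonnegative real Th_j, and nonnegative reals Th_{j,i'} for each buyer i' ∈ {K*+1,…,N}. Assume that for every round t with j ∈ P_s(t), either n_{s,j}(t) ≤ Th_j, or there exists a buyer i' ∈ {K*+1,…,N}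 with i' ∈ P_b(t) and n_{b,i'}(t) ≤ Th_{j,i'}. Then n_{s,j}(T) ≤ Th_j + Σ_{i'=K*+1}^{N} Th_{j,i'}. -/
open Finset

/-- Only the last round of `S` matters: all of `S` is counted by the counter at `S.max'`. -/
theorem card_le_of_card_filter_Icc_le {α : Type*} [LinearOrder α] [LocallyFiniteOrder α]
    {p : α → Prop} [DecidablePred p] {a : α} {S : Finset α} {c : ℝ} (hc : 0 ≤ c)
    (hS : ∀ t ∈ S, a ≤ t ∧ p t) (hcount : ∀ t ∈ S, (#{t' ∈ Icc a t | p t'} : ℝ) ≤ c) :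
    (#S : ℝ) ≤ c := by
  rcases S.eq_empty_or_nonempty with rfl | hne
  · simpa using hc
  have hsub : S ⊆ {t' ∈ Icc a (S.max' hne) | p t'} := fun t ht =>
    mem_filter.mpr ⟨mem_Icc.mpr ⟨(hS t ht).1, S.le_max' t ht⟩, (hS t ht).2⟩
  calc (#S : ℝ) ≤ #{t' ∈ Icc a (S.max' hne) | p t'} := by exact_mod_cast card_le_card hsub
    _ ≤ c := hcount _ (S.max'_mem hne)

theorem stmt_10_general (T N Kstar : ℕ)
    (Pb Ps : ℕ → Finset ℕ)
    (j : ℕ) (Thj : ℝ) (hThj : 0 ≤ Thj)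
    (Th : ℕ → ℝ) (hTh : ∀ i' ∈ Finset.Icc (Kstar + 1) N, 0 ≤ Th i')
    (hmain : ∀ t ∈ Finset.Icc 1 T, j ∈ Ps t →
      ((((Finset.Icc 1 t).filter fun t' => j ∈ Ps t').card : ℝ) ≤ Thj) ∨
      ∃ i' ∈ Finset.Icc (Kstar + 1) N, i' ∈ Pb t ∧
        (((Finset.Icc 1 t).filter fun t' => i' ∈ Pb t').card : ℝ) ≤ Th i') :
    (((Finset.Icc 1 T).filter fun t => j ∈ Ps t).card : ℝ)
      ≤ Thj + ∑ i' ∈ Finset.Icc (Kstar + 1) N, Th i' := by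
  classical
  set rounds := {t ∈ Icc 1 T | j ∈ Ps t}
  set sellerRounds := {t ∈ rounds | (#{t' ∈ Icc 1 t | j ∈ Ps t'} : ℝ) ≤ Thj}
  set buyerRounds := fun i : ℕ => {t ∈ Icc 1 T | i ∈ Pb t ∧ (#{t' ∈ Icc 1 t | i ∈ Pb t'} : ℝ) ≤ Th i}
  have hcover : rounds ⊆ sellerRounds ∪ (Icc (Kstar + 1) N).biUnion buyerRounds := by
    intro t ht
    obtain ⟨hround, hj⟩ := mem_filter.mp ht
    rcases hmain t hround hj with hseller | ⟨i, hi, hib, hbuyer⟩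
    · exact mem_union_left _ (mem_filter.mpr ⟨ht, hseller⟩)
    · exact mem_union_right _ (mem_biUnion.mpr ⟨i, hi, mem_filter.mpr ⟨hround, hib, hbuyer⟩⟩)
  have hseller : (#sellerRounds : ℝ) ≤ Thj :=
    card_le_of_card_filter_Icc_le hThj
      (fun t ht => by simp only [sellerRounds, rounds, mem_filter, mem_Icc] at ht; tauto)
      (fun t ht => (mem_filter.mp ht).2)
  have hbuyer (i) (hi : i ∈ Icc (Kstar + 1) N) : (#(buyerRounds i) : ℝ) ≤ Th i :=
    card_le_of_card_filter_Icc_le (hTh i hi)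
      (fun t ht => by simp only [buyerRounds, mem_filter, mem_Icc] at ht; tauto)
      (fun t ht => (mem_filter.mp ht).2.2)
  have hcard : #rounds ≤ #sellerRounds + ∑ i ∈ Icc (Kstar + 1) N, #(buyerRounds i) :=
    (card_le_card hcover).trans <| (card_union_le _ _).trans <| by gcongr; exact card_biUnion_le
  calc (#rounds : ℝ) ≤ #sellerRounds + ∑ i ∈ Icc (Kstar + 1) N, (#(buyerRounds i) : ℝ) := by
        exact_mod_cast hcard
    _ ≤ Thj + ∑ i ∈ Icc (Kstar + 1) N, Th i := add_le_add hseller (sum_le_sum hbuyer)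

/-- Participation bound for a non-optimal seller: if in every round in
which seller `j` participates either its own counter is at most `Thj`, or some optimal
non-participating buyer `i' ∈ {Kstar+1,…,N}` participates with counter at most
`Th i'`, then the total number of participations of seller `j` is at most
`Thj + Σ_{i' = Kstar+1}^{N} Th i'`. -/
theorem stmt_10 (T N M Kstar : ℕ) (hT : 1 ≤ T) (hN : 1 ≤ N) (hM : 1 ≤ M) (hK : Kstar ≤ N)
    (Pb Ps : ℕ → Finset ℕ)
    (hPb : ∀ t ∈ Finset.Icc 1 T, Pb t ⊆ Finset.Icc 1 N)
    (hPs : ∀ t ∈ Finset.Icc 1 T, Ps t ⊆ Finset.Icc 1 M)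
    (j : ℕ) (Thj : ℝ) (hThj : 0 ≤ Thj)
    (Th : ℕ → ℝ) (hTh : ∀ i' ∈ Finset.Icc (Kstar + 1) N, 0 ≤ Th i')
    (hmain : ∀ t ∈ Finset.Icc 1 T, j ∈ Ps t →
      ((((Finset.Icc 1 t).filter fun t' => j ∈ Ps t').card : ℝ) ≤ Thj) ∨
      ∃ i' ∈ Finset.Icc (Kstar + 1) N, i' ∈ Pb t ∧
        (((Finset.Icc 1 t).filter fun t' => i' ∈ Pb t').card : ℝ) ≤ Th i') :
    (((Finset.Icc 1 T).filter fun t => j ∈ Ps t).card : ℝ)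
      ≤ Thj + ∑ i' ∈ Finset.Icc (Kstar + 1) N, Th i' :=
  stmt_10_general T N Kstar Pb Ps j Thj hThj Th hTh hmain
end

section
/- Per-round social-welfare decomposition inequality (key step of Lemma 6): let B_1 ≥ … ≥ B_N and S_1 ≤ … ≤ S_M be reals, let 0 ≤ K* ≤ min(M,N) be an integer such that B_{i'} ≤ S_{j'} for all i' ∈ {K*+1,…,N} and j' ∈ {K*+1,…,M}, and let P_b ⊆ {1,…,N} and P_s ⊆ {1,…,M} satisfy |P_b| = |P_s| ≥ K*. Then (Σ_{i=1}^{K*} B_i + Σ_{j=K*+1}^{M} S_j) − (Σ_{i∈P_b} B_i + Σ_{j∈{1,…,M}∖P_s} S_j) ≤ Σ_{i=1}^{K*} Σ_{i'=K*+1}^{N} (B_i − B_{i'})·𝟙[i ∉ P_b and i' ∈ P_b] + Σ_{j=1}^{K*} Σ_{j'=K*+1}^{M} (S_{j'} − S_j)·𝟙[j ∉ P_s and j' ∈ P_s] + Σ_{i'=K*+1}^{N} Σ_{j'=K*+1}^{M} (S_{j'} − B_{i'})·𝟙[i' ∈ P_b and j' ∈ P_s]. -/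
lemma aux_key (a b p q : ℕ) (α β γ δ : ℝ)
    (h1 : (a:ℝ)*β ≤ p*α) (h2 : (q:ℝ)*δ ≤ b*γ) (h3 : (q:ℝ)*β ≤ p*γ)
    (hpb : p + b = q + a) (hap : a ≤ p) (hbq : b ≤ q)
    (hα : a = 0 → α = 0) (hβ : p = 0 → β = 0) (hγ : q = 0 → γ = 0) (hδ : b = 0 → δ = 0) :
    α - β + γ - δ ≤ ((p:ℝ)*α - a*β) + ((b:ℝ)*γ - q*δ) + ((p:ℝ)*γ - q*β) := by
  rcases Nat.eq_zero_or_pos p with hp | hp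
  · subst hp
    have ha : a = 0 := Nat.le_zero.mp hap
    have hbq' : b = q := by omega
    subst ha; subst hbq'
    rcases Nat.eq_zero_or_pos b with hb | hb
    · subst hb; simp [hα rfl, hβ rfl, hγ rfl, hδ rfl]
    · have h1' : (1:ℝ) ≤ b := by exact_mod_cast hb
      simp only [hα rfl, hβ rfl, Nat.cast_zero, zero_mul, mul_zero, sub_zero, zero_sub,
        zero_add, zero_mul] at *
      nlinarith [h2, mul_nonneg (sub_nonneg.mpr h1') (sub_nonneg.mpr (le_of_mul_le_mul_left (by linarith [h2]) (by linarith : (0:ℝ) < b)))]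
  rcases Nat.eq_zero_or_pos q with hq | hq
  · subst hq
    have hb : b = 0 := Nat.le_zero.mp hbq
    have hap' : a = p := by omega
    subst hb; subst hap'
    have hγ0 := hγ rfl; have hδ0 := hδ (rfl)
    have h1' : (1:ℝ) ≤ a := by exact_mod_cast hp
    simp only [hγ0, hδ0, Nat.cast_zero, zero_mul, mul_zero, sub_zero, add_zero] at *
    nlinarith [h1, mul_nonneg (sub_nonneg.mpr h1') (sub_nonneg.mpr (le_of_mul_le_mul_left (by linarith [h1]) (by linarith : (0:ℝ) < a)))]
  · have hP : (1:ℝ) ≤ p := by exact_mod_cast hp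
    have hQ : (1:ℝ) ≤ q := by exact_mod_cast hq
    have hB : (0:ℝ) ≤ b := by positivity
    have hbq' : (b:ℝ) ≤ q := by exact_mod_cast hbq
    have hA : (a:ℝ) = p + b - q := by
      have : (p:ℝ) + b = q + a := by exact_mod_cast hpb
      linarith
    rw [hA] at h1 ⊢
    have t1 : (0:ℝ) ≤ (p:ℝ)*α - ((p:ℝ)+b-q)*β := by linarith
    have t2 : (0:ℝ) ≤ (b:ℝ)*γ - q*δ := by linarith
    have t3 : (0:ℝ) ≤ (p:ℝ)*γ - q*β := by linarith
    have key : (0:ℝ) ≤ (p*q : ℝ) *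
        ((((p:ℝ)*α - ((p:ℝ)+b-q)*β) + ((b:ℝ)*γ - q*δ) + ((p:ℝ)*γ - q*β)) - (α - β + γ - δ)) := by
      have e : (p*q : ℝ) *
          ((((p:ℝ)*α - ((p:ℝ)+b-q)*β) + ((b:ℝ)*γ - q*δ) + ((p:ℝ)*γ - q*β)) - (α - β + γ - δ))
          = ((p:ℝ)-1)*q*((p:ℝ)*α - ((p:ℝ)+b-q)*β) + ((q:ℝ)-1)*p*((b:ℝ)*γ - q*δ)
            + ((p:ℝ)*q - ((q:ℝ)-b))*((p:ℝ)*γ - q*β) := by ring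
      rw [e]
      have c1 : (0:ℝ) ≤ ((p:ℝ)-1)*q := by nlinarith
      have c2 : (0:ℝ) ≤ ((q:ℝ)-1)*p := by nlinarith
      have c3 : (0:ℝ) ≤ (p:ℝ)*q - ((q:ℝ)-b) := by nlinarith
      have := mul_nonneg c1 t1
      have := mul_nonneg c2 t2
      have := mul_nonneg c3 t3
      linarith
    have hpq : (0:ℝ) < (p*q : ℝ) := by positivity
    nlinarith [key, hpq]

lemma aux_sum_sum_ite (s t : Finset ℕ) (P Q : ℕ → Prop) [DecidablePred P] [DecidablePred Q]
    (f : ℕ → ℕ → ℝ) :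
    ∑ i ∈ s, ∑ j ∈ t, (if P i ∧ Q j then f i j else 0)
      = ∑ i ∈ s.filter P, ∑ j ∈ t.filter Q, f i j := by
  rw [Finset.sum_filter]
  refine Finset.sum_congr rfl fun i _ => ?_
  by_cases h : P i <;> simp [h, Finset.sum_filter]

lemma aux_sum_sub (s t : Finset ℕ) (f g : ℕ → ℝ) :
    ∑ i ∈ s, ∑ j ∈ t, (f i - g j)
      = (t.card : ℝ) * ∑ i ∈ s, f i - (s.card : ℝ) * ∑ j ∈ t, g j := by
  simp only [Finset.sum_sub_distrib, Finset.sum_const, nsmul_eq_mul, Finset.mul_sum,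
    Finset.sum_mul]

/-- Per-round social-welfare decomposition inequality: with buyers'
valuations sorted in decreasing order, sellers' valuations sorted in increasing order,
`B i' ≤ S j'` for all non-optimal pairs `i' > Kstar`, `j' > Kstar`, and participating
sets `Pb`, `Ps` of equal cardinality at least `Kstar`, the per-round social-welfare
regret is bounded by the indicator decomposition over displaced buyers, displaced
sellers, and matched non-optimal pairs. -/
theorem stmt_11 (N M Kstar : ℕ) (B S : ℕ → ℝ)
    (hBsort : ∀ i i', 1 ≤ i → i ≤ i' → i' ≤ N → B i' ≤ B i)
    (hSsort : ∀ j j', 1 ≤ j → j ≤ j' → j' ≤ M → S j ≤ S j')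
    (hKN : Kstar ≤ N) (hKM : Kstar ≤ M)
    (hsep : ∀ i' ∈ Finset.Icc (Kstar + 1) N, ∀ j' ∈ Finset.Icc (Kstar + 1) M, B i' ≤ S j')
    (Pb Ps : Finset ℕ)
    (hPb : Pb ⊆ Finset.Icc 1 N) (hPs : Ps ⊆ Finset.Icc 1 M)
    (hcard : Pb.card = Ps.card) (hcardK : Kstar ≤ Pb.card) :
    (∑ i ∈ Finset.Icc 1 Kstar, B i + ∑ j ∈ Finset.Icc (Kstar + 1) M, S j)
      - (∑ i ∈ Pb, B i + ∑ j ∈ Finset.Icc 1 M \ Ps, S j)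
    ≤ (∑ i ∈ Finset.Icc 1 Kstar, ∑ i' ∈ Finset.Icc (Kstar + 1) N,
         if i ∉ Pb ∧ i' ∈ Pb then B i - B i' else 0)
      + (∑ j ∈ Finset.Icc 1 Kstar, ∑ j' ∈ Finset.Icc (Kstar + 1) M,
         if j ∉ Ps ∧ j' ∈ Ps then S j' - S j else 0)
      + (∑ i' ∈ Finset.Icc (Kstar + 1) N, ∑ j' ∈ Finset.Icc (Kstar + 1) M,
         if i' ∈ Pb ∧ j' ∈ Ps then S j' - B i' else 0) := by
  classical
  set K := Kstar
  set A' : Finset ℕ := (Finset.Icc 1 K).filter (· ∉ Pb) with hA'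
  set Pp : Finset ℕ := (Finset.Icc (K+1) N).filter (· ∈ Pb) with hPp
  set B' : Finset ℕ := (Finset.Icc 1 K).filter (· ∉ Ps) with hB'
  set Qp : Finset ℕ := (Finset.Icc (K+1) M).filter (· ∈ Ps) with hQp
  set α := ∑ i ∈ A', B i with hα
  set β := ∑ i ∈ Pp, B i with hβ
  set γ := ∑ j ∈ Qp, S j with hγ
  set δ := ∑ j ∈ B', S j with hδ
  -- split of Pb
  have hPbf1 : Pb.filter (fun i => i ≤ K) = (Finset.Icc 1 K).filter (· ∈ Pb) := by
    ext i
    simp only [Finset.mem_filter, Finset.mem_Icc]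
    constructor
    · rintro ⟨h1, h2⟩
      have := Finset.mem_Icc.mp (hPb h1)
      exact ⟨⟨this.1, h2⟩, h1⟩
    · rintro ⟨⟨_, h2⟩, h1⟩
      exact ⟨h1, h2⟩
  have hPbf2 : Pb.filter (fun i => ¬ i ≤ K) = Pp := by
    ext i
    simp only [hPp, Finset.mem_filter, Finset.mem_Icc]
    constructor
    · rintro ⟨h1, h2⟩
      have := Finset.mem_Icc.mp (hPb h1)
      exact ⟨⟨by omega, this.2⟩, h1⟩
    · rintro ⟨⟨h2, _⟩, h1⟩
      exact ⟨h1, by omega⟩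
  have hPsf1 : Ps.filter (fun j => j ≤ K) = (Finset.Icc 1 K).filter (· ∈ Ps) := by
    ext j
    simp only [Finset.mem_filter, Finset.mem_Icc]
    constructor
    · rintro ⟨h1, h2⟩
      have := Finset.mem_Icc.mp (hPs h1)
      exact ⟨⟨this.1, h2⟩, h1⟩
    · rintro ⟨⟨_, h2⟩, h1⟩
      exact ⟨h1, h2⟩
  have hPsf2 : Ps.filter (fun j => ¬ j ≤ K) = Qp := by
    ext j
    simp only [hQp, Finset.mem_filter, Finset.mem_Icc]
    constructor
    · rintro ⟨h1, h2⟩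
      have := Finset.mem_Icc.mp (hPs h1)
      exact ⟨⟨by omega, this.2⟩, h1⟩
    · rintro ⟨⟨h2, _⟩, h1⟩
      exact ⟨h1, by omega⟩
  -- E1
  have E1 : ∑ i ∈ Finset.Icc 1 K, B i - ∑ i ∈ Pb, B i = α - β := by
    have h1 : ∑ i ∈ Finset.Icc 1 K, B i
        = ∑ i ∈ (Finset.Icc 1 K).filter (· ∈ Pb), B i + α := by
      rw [hα, hA']
      exact (Finset.sum_filter_add_sum_filter_not _ _ _).symm
    have h2 : ∑ i ∈ Pb, B i
        = ∑ i ∈ (Finset.Icc 1 K).filter (· ∈ Pb), B i + β := by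
      rw [hβ, ← hPbf1, ← hPbf2]
      exact (Finset.sum_filter_add_sum_filter_not _ _ _).symm
    rw [h1, h2]; ring
  -- E2
  have E2 : ∑ j ∈ Finset.Icc (K+1) M, S j - ∑ j ∈ Finset.Icc 1 M \ Ps, S j = γ - δ := by
    have h1 : ∑ j ∈ Finset.Icc (K+1) M, S j
        = γ + ∑ j ∈ (Finset.Icc (K+1) M).filter (· ∉ Ps), S j := by
      rw [hγ, hQp]
      exact (Finset.sum_filter_add_sum_filter_not _ _ _).symm
    have hsplit : Finset.Icc 1 M \ Ps
        = B' ∪ (Finset.Icc (K+1) M).filter (· ∉ Ps) := by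
      ext j
      simp only [hB', Finset.mem_sdiff, Finset.mem_union, Finset.mem_filter, Finset.mem_Icc]
      constructor
      · rintro ⟨⟨h1, h2⟩, h3⟩
        by_cases h : j ≤ K
        · exact Or.inl ⟨⟨h1, h⟩, h3⟩
        · exact Or.inr ⟨⟨by omega, h2⟩, h3⟩
      · rintro (⟨⟨h1, h2⟩, h3⟩ | ⟨⟨h1, h2⟩, h3⟩)
        · exact ⟨⟨h1, by omega⟩, h3⟩
        · exact ⟨⟨by omega, h2⟩, h3⟩
    have hdisj : Disjoint B' ((Finset.Icc (K+1) M).filter (· ∉ Ps)) := by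
      rw [Finset.disjoint_left]
      intro j hj hj'
      simp only [hB', Finset.mem_filter, Finset.mem_Icc] at hj hj'
      omega
    have h2 : ∑ j ∈ Finset.Icc 1 M \ Ps, S j
        = δ + ∑ j ∈ (Finset.Icc (K+1) M).filter (· ∉ Ps), S j := by
      rw [hsplit, Finset.sum_union hdisj, hδ]
    rw [h1, h2]; ring
  -- T rewrites
  have T1eq : (∑ i ∈ Finset.Icc 1 K, ∑ i' ∈ Finset.Icc (K + 1) N,
        if i ∉ Pb ∧ i' ∈ Pb then B i - B i' else 0)
      = (Pp.card : ℝ) * α - (A'.card : ℝ) * β := by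
    rw [aux_sum_sum_ite, ← hA']
    rw [← hPp]
    rw [aux_sum_sub, hα, hβ]
  have T2eq : (∑ j ∈ Finset.Icc 1 K, ∑ j' ∈ Finset.Icc (K + 1) M,
        if j ∉ Ps ∧ j' ∈ Ps then S j' - S j else 0)
      = (B'.card : ℝ) * γ - (Qp.card : ℝ) * δ := by
    rw [aux_sum_sum_ite, ← hB']
    rw [← hQp]
    rw [Finset.sum_comm, aux_sum_sub, hγ, hδ]
  have T3eq : (∑ i' ∈ Finset.Icc (K + 1) N, ∑ j' ∈ Finset.Icc (K + 1) M,
        if i' ∈ Pb ∧ j' ∈ Ps then S j' - B i' else 0)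
      = (Pp.card : ℝ) * γ - (Qp.card : ℝ) * β := by
    rw [aux_sum_sum_ite, ← hPp]
    rw [← hQp]
    rw [Finset.sum_comm, aux_sum_sub, hγ, hβ]
  -- nonnegativity
  have h1 : (A'.card : ℝ) * β ≤ (Pp.card : ℝ) * α := by
    have : (0:ℝ) ≤ ∑ i ∈ A', ∑ i' ∈ Pp, (B i - B i') := by
      apply Finset.sum_nonneg; intro i hi
      apply Finset.sum_nonneg; intro i' hi'
      simp only [hA', hPp, Finset.mem_filter, Finset.mem_Icc] at hi hi'
      have := hBsort i i' hi.1.1 (by omega) hi'.1.2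
      linarith
    rw [aux_sum_sub] at this
    rw [hα, hβ]; linarith
  have h2 : (Qp.card : ℝ) * δ ≤ (B'.card : ℝ) * γ := by
    have : (0:ℝ) ≤ ∑ j' ∈ Qp, ∑ j ∈ B', (S j' - S j) := by
      apply Finset.sum_nonneg; intro j' hj'
      apply Finset.sum_nonneg; intro j hj
      simp only [hB', hQp, Finset.mem_filter, Finset.mem_Icc] at hj hj'
      have := hSsort j j' hj.1.1 (by omega) hj'.1.2
      linarith
    rw [aux_sum_sub] at this
    rw [hγ, hδ]; linarith
  have h3 : (Qp.card : ℝ) * β ≤ (Pp.card : ℝ) * γ := by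
    have : (0:ℝ) ≤ ∑ j' ∈ Qp, ∑ i' ∈ Pp, (S j' - B i') := by
      apply Finset.sum_nonneg; intro j' hj'
      apply Finset.sum_nonneg; intro i' hi'
      simp only [hPp, hQp, Finset.mem_filter, Finset.mem_Icc] at hi' hj'
      have := hsep i' (Finset.mem_Icc.mpr hi'.1) j' (Finset.mem_Icc.mpr hj'.1)
      linarith
    rw [aux_sum_sub] at this
    rw [hγ, hβ]; linarith
  -- cardinalities
  have cK1 : ((Finset.Icc 1 K).filter (· ∈ Pb)).card + A'.card = K := by
    rw [hA']
    rw [Finset.card_filter_add_card_filter_not]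
    simp [Nat.card_Icc]
  have cK2 : ((Finset.Icc 1 K).filter (· ∈ Ps)).card + B'.card = K := by
    rw [hB']
    rw [Finset.card_filter_add_card_filter_not]
    simp [Nat.card_Icc]
  have cPb : ((Finset.Icc 1 K).filter (· ∈ Pb)).card + Pp.card = Pb.card := by
    rw [← hPbf1, ← hPbf2]
    exact Finset.card_filter_add_card_filter_not _
  have cPs : ((Finset.Icc 1 K).filter (· ∈ Ps)).card + Qp.card = Ps.card := by
    rw [← hPsf1, ← hPsf2]
    exact Finset.card_filter_add_card_filter_not _
  have hpbcard : Pp.card + B'.card = Qp.card + A'.card := by omega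
  have hap : A'.card ≤ Pp.card := by omega
  have hbq : B'.card ≤ Qp.card := by omega
  -- zero conditions
  have hα0 : A'.card = 0 → α = 0 := by
    intro h; rw [hα, Finset.card_eq_zero.mp h, Finset.sum_empty]
  have hβ0 : Pp.card = 0 → β = 0 := by
    intro h; rw [hβ, Finset.card_eq_zero.mp h, Finset.sum_empty]
  have hγ0 : Qp.card = 0 → γ = 0 := by
    intro h; rw [hγ, Finset.card_eq_zero.mp h, Finset.sum_empty]
  have hδ0 : B'.card = 0 → δ = 0 := by
    intro h; rw [hδ, Finset.card_eq_zero.mp h, Finset.sum_empty]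
  have main := aux_key A'.card B'.card Pp.card Qp.card α β γ δ h1 h2 h3
    hpbcard hap hbq hα0 hβ0 hγ0 hδ0
  rw [T1eq, T2eq, T3eq]
  linarith [E1, E2, main]
end

section
/- Social-welfare regret bound under the confidence event (on-event part of Theorem 1 / Lemma 6, up to an absolute constant): run the UCB/LCB average-mechanism protocol over rounds t = 1,…,T, and assume: (i) the confidence event with parameter β ≥ 0 holds at every round t ∈ {1,…,T}; (ii) α_{b,i} > β for every buyer i and α_{s,j} > β for every seller j; (iii) B_i > B_{i'} for all i ≤ K* < i' ≤ N, S_{j'} > S_j for all j ≤ K* < j' ≤ M, and S_{j'} > B_{i'} for all i' ∈ {K*+1,…,N} and j' ∈ {K*+1,…,M}. Then Σ_{t=1}^{T} [(Σ_{i=1}^{K*} B_i + Σ_{j=K*+1}^{M} S_j) − (Σ_{i∈P_b(t)} B_i + Σ_{j∈{1,…,M}∖P_s(t)} S_j)] ≤ 4·(√α_max + √β)²·log T · [Σ_{i=1}^{K*} Σ_{i'=K*+1}^{N} 1/(B_i − B_{i'}) + Σ_{j=1}^{K*} Σ_{j'=K*+1}^{M} 1/(S_{j'} − S_j) + Σ_{i'=K*+1}^{N}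 Σ_{j'=K*+1}^{M} 1/(S_{j'} − B_{i'})]. -/
/-- The UCB/LCB average-mechanism protocol over rounds `t = 1,…,T`, with `N` buyers
(indexed `1,…,N`, valuations `B`) and `M` sellers (indexed `1,…,M`, valuations `S`).
Each buyer `i` has a participation counter `mb i` starting at `1` and incremented on the
rounds she participates, and bids the UCB index
`bid i t = bhat i t + √(alphab i · log t / mb i t)`; each seller `j` analogously asks the
LCB index `ask j t = shat j t − √(alphas j · log t / ms j t)`. The participating sets
`Pb t` and `Ps t` have equal cardinality given by the break-even count of the submitted
bids, the participating buyers are the highest bidders, the participating sellers are the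
lowest askers, and every participating bid is at least every participating ask. -/
structure DAProtocol (N M T : ℕ) where
  B : ℕ → ℝ
  S : ℕ → ℝ
  alphab : ℕ → ℝ
  alphas : ℕ → ℝ
  bhat : ℕ → ℕ → ℝ
  shat : ℕ → ℕ → ℝ
  mb : ℕ → ℕ → ℕ
  ms : ℕ → ℕ → ℕ
  Pb : ℕ → Finset ℕ
  Ps : ℕ → Finset ℕ
  bid : ℕ → ℕ → ℝ
  ask : ℕ → ℕ → ℝ
  mb_one : ∀ i, mb i 1 = 1
  ms_one : ∀ j, ms j 1 = 1
  mb_succ : ∀ i t, 1 ≤ t → mb i (t + 1) = if i ∈ Pb t then mb i t + 1 else mb i t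
  ms_succ : ∀ j t, 1 ≤ t → ms j (t + 1) = if j ∈ Ps t then ms j t + 1 else ms j t
  bid_def : ∀ i t, bid i t = bhat i t + Real.sqrt (alphab i * Real.log t / mb i t)
  ask_def : ∀ j t, ask j t = shat j t - Real.sqrt (alphas j * Real.log t / ms j t)
  Pb_sub : ∀ t, Pb t ⊆ Finset.Icc 1 N
  Ps_sub : ∀ t, Ps t ⊆ Finset.Icc 1 M
  card_eq : ∀ t, 1 ≤ t → t ≤ T → (Pb t).card = (Ps t).card
  card_breakEven : ∀ t, 1 ≤ t → t ≤ T →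
    (Pb t).card = breakEven N M (fun i => bid i t) (fun j => ask j t)
  Pb_top : ∀ t, 1 ≤ t → t ≤ T → ∀ i ∈ Pb t, ∀ i' ∈ Finset.Icc 1 N, i' ∉ Pb t →
    bid i' t ≤ bid i t
  Ps_bot : ∀ t, 1 ≤ t → t ≤ T → ∀ j ∈ Ps t, ∀ j' ∈ Finset.Icc 1 M, j' ∉ Ps t →
    ask j t ≤ ask j' t
  price_ok : ∀ t, 1 ≤ t → t ≤ T → ∀ i ∈ Pb t, ∀ j ∈ Ps t, ask j t ≤ bid i t

/-- The confidence event with parameter `β` at round `t`: every buyer's empirical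
estimate is within `√(β·log t / mb i t)` of her valuation, and every seller's empirical
estimate is within `√(β·log t / ms j t)` of her valuation. -/
def DAProtocol.ConfEvent {N M T : ℕ} (P : DAProtocol N M T) (β : ℝ) (t : ℕ) : Prop :=
  (∀ i ∈ Finset.Icc 1 N, |P.bhat i t - P.B i| ≤ Real.sqrt (β * Real.log t / P.mb i t)) ∧
  (∀ j ∈ Finset.Icc 1 M, |P.shat j t - P.S j| ≤ Real.sqrt (β * Real.log t / P.ms j t))

/-- The round-`t` trading price: the average of the lowest participating bid and the
highest participating ask. -/
noncomputable def DAProtocol.price {N M T : ℕ} (P : DAProtocol N M T) (t : ℕ) : ℝ :=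
  (sInf ((fun i => P.bid i t) '' ↑(P.Pb t)) + sSup ((fun j => P.ask j t) '' ↑(P.Ps t))) / 2

lemma aux_exists_injOn_image (s u : Finset ℕ) (h : s.card ≤ u.card) :
    ∃ φ : ℕ → ℕ, Set.InjOn φ ↑s ∧ s.image φ ⊆ u := by
  obtain ⟨Y, hYu, hYcard⟩ := Finset.exists_subset_card_eq h
  have hc : s.card = Y.card := hYcard.symm
  let e := Finset.equivOfCardEq hc
  refine ⟨fun x => if hx : x ∈ s then (e ⟨x, hx⟩ : ℕ) else 0, ?_, ?_⟩
  · intro x hx y hy hxy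
    simp only [Finset.mem_coe] at hx hy
    simp only [dif_pos hx, dif_pos hy] at hxy
    have : e ⟨x, hx⟩ = e ⟨y, hy⟩ := Subtype.ext hxy
    have := e.injective this
    exact congrArg Subtype.val this
  · intro z hz
    simp only [Finset.mem_image] at hz
    obtain ⟨x, hx, hxz⟩ := hz
    apply hYu
    rw [← hxz]
    simp only [dif_pos hx]
    exact (e ⟨x, hx⟩).2

set_option maxHeartbeats 1600000 in
/-- Social-welfare regret bound under the confidence event: if the
confidence event with parameter `β` holds at every round, every exploration parameter
exceeds `β`, and the valuation gaps across the optimal cut `K* = Kstar N M B S` are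
strictly positive, then the cumulative social-welfare regret over rounds `1,…,T` is at
most `4·(√αmax + √β)²·log T` times the sum of reciprocal gaps. -/
theorem stmt_12 (N M T : ℕ) (hN : 1 ≤ N) (hM : 1 ≤ M) (hT : 1 ≤ T)
    (P : DAProtocol N M T)
    (hBsort : ∀ i i', 1 ≤ i → i ≤ i' → i' ≤ N → P.B i' ≤ P.B i)
    (hSsort : ∀ j j', 1 ≤ j → j ≤ j' → j' ≤ M → P.S j ≤ P.S j')
    (K : ℕ) (hKdef : K = Kstar N M P.B P.S)
    (β : ℝ) (hβ : 0 ≤ β)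
    (hconf : ∀ t ∈ Finset.Icc 1 T, P.ConfEvent β t)
    (hαb : ∀ i ∈ Finset.Icc 1 N, β < P.alphab i)
    (hαs : ∀ j ∈ Finset.Icc 1 M, β < P.alphas j)
    (αmax : ℝ)
    (hαmax_b : ∀ i ∈ Finset.Icc 1 N, P.alphab i ≤ αmax)
    (hαmax_s : ∀ j ∈ Finset.Icc 1 M, P.alphas j ≤ αmax)
    (hαmax_mem : (∃ i ∈ Finset.Icc 1 N, P.alphab i = αmax) ∨
                 (∃ j ∈ Finset.Icc 1 M, P.alphas j = αmax))
    (hgapb : ∀ i ∈ Finset.Icc 1 K, ∀ i' ∈ Finset.Icc (K + 1) N, P.B i' < P.B i)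
    (hgaps : ∀ j ∈ Finset.Icc 1 K, ∀ j' ∈ Finset.Icc (K + 1) M, P.S j < P.S j')
    (hgapbs : ∀ i' ∈ Finset.Icc (K + 1) N, ∀ j' ∈ Finset.Icc (K + 1) M,
      P.B i' < P.S j') :
    ∑ t ∈ Finset.Icc 1 T,
      ((∑ i ∈ Finset.Icc 1 K, P.B i + ∑ j ∈ Finset.Icc (K + 1) M, P.S j)
        - (∑ i ∈ P.Pb t, P.B i + ∑ j ∈ Finset.Icc 1 M \ P.Ps t, P.S j))
    ≤ 4 * (Real.sqrt αmax + Real.sqrt β) ^ 2 * Real.log T *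
      ((∑ i ∈ Finset.Icc 1 K, ∑ i' ∈ Finset.Icc (K + 1) N, 1 / (P.B i - P.B i'))
        + (∑ j ∈ Finset.Icc 1 K, ∑ j' ∈ Finset.Icc (K + 1) M, 1 / (P.S j' - P.S j))
        + (∑ i' ∈ Finset.Icc (K + 1) N, ∑ j' ∈ Finset.Icc (K + 1) M,
            1 / (P.S j' - P.B i'))) := by
  classical
  set C := Real.sqrt αmax + Real.sqrt β with hC
  set L := Real.log T with hL
  have hT1 : (1:ℝ) ≤ (T:ℝ) := by exact_mod_cast hT
  have hL0 : 0 ≤ L := Real.log_nonneg hT1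
  have hC0 : 0 ≤ C := by positivity
  have h1N : (1:ℕ) ∈ Finset.Icc 1 N := by simp [hN]
  have hαmax0 : 0 ≤ αmax :=
    le_trans hβ (le_trans (le_of_lt (hαb 1 h1N)) (hαmax_b 1 h1N))
  -- counter lemmas
  have hmb_count : ∀ i t, 1 ≤ t →
      1 + ((Finset.Ico 1 t).filter (fun u => i ∈ P.Pb u)).card ≤ P.mb i t := by
    intro i t ht
    induction t, ht using Nat.le_induction with
    | base => simp [P.mb_one]
    | succ t ht ih =>
      rw [P.mb_succ i t ht]
      have hins : Finset.Ico 1 (t + 1) = insert t (Finset.Ico 1 t) := by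
        ext x; simp only [Finset.mem_Ico, Finset.mem_insert]; omega
      rw [hins, Finset.filter_insert]
      by_cases hP : i ∈ P.Pb t
      · rw [if_pos hP, if_pos hP, Finset.card_insert_of_notMem (by simp)]
        omega
      · rw [if_neg hP, if_neg hP]; exact ih
  have hms_count : ∀ j t, 1 ≤ t →
      1 + ((Finset.Ico 1 t).filter (fun u => j ∈ P.Ps u)).card ≤ P.ms j t := by
    intro j t ht
    induction t, ht using Nat.le_induction with
    | base => simp [P.ms_one]
    | succ t ht ih =>
      rw [P.ms_succ j t ht]
      have hins : Finset.Ico 1 (t + 1) = insert t (Finset.Ico 1 t) := by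
        ext x; simp only [Finset.mem_Ico, Finset.mem_insert]; omega
      rw [hins, Finset.filter_insert]
      by_cases hP : j ∈ P.Ps t
      · rw [if_pos hP, if_pos hP, Finset.card_insert_of_notMem (by simp)]
        omega
      · rw [if_neg hP, if_neg hP]; exact ih
  have hmb_pos : ∀ i t, 1 ≤ t → 1 ≤ P.mb i t := fun i t ht =>
    le_trans (Nat.le_add_right 1 _) (hmb_count i t ht)
  have hms_pos : ∀ j t, 1 ≤ t → 1 ≤ P.ms j t := fun j t ht =>
    le_trans (Nat.le_add_right 1 _) (hms_count j t ht)
  -- log facts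
  have hlog0 : ∀ t : ℕ, 1 ≤ t → 0 ≤ Real.log t := fun t h =>
    Real.log_nonneg (by exact_mod_cast h)
  have hlogle : ∀ t : ℕ, 1 ≤ t → t ≤ T → Real.log t ≤ L := fun t h1 h2 =>
    Real.log_le_log (by positivity) (by exact_mod_cast h2)
  -- optimism
  have hopt_b : ∀ t ∈ Finset.Icc 1 T, ∀ i ∈ Finset.Icc 1 N, P.B i ≤ P.bid i t := by
    intro t ht i hi
    obtain ⟨ht1, htT⟩ := Finset.mem_Icc.mp ht
    have hmpos : (0:ℝ) < P.mb i t := by exact_mod_cast hmb_pos i t ht1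
    have hcf := abs_le.mp ((hconf t ht).1 i hi)
    have hmono : Real.sqrt (β * Real.log t / P.mb i t)
        ≤ Real.sqrt (P.alphab i * Real.log t / P.mb i t) := by
      apply Real.sqrt_le_sqrt
      exact (div_le_div_iff_of_pos_right hmpos).mpr
        (mul_le_mul_of_nonneg_right (le_of_lt (hαb i hi)) (hlog0 t ht1))
    rw [P.bid_def]
    linarith [hcf.1]
  have hopt_s : ∀ t ∈ Finset.Icc 1 T, ∀ j ∈ Finset.Icc 1 M, P.ask j t ≤ P.S j := by
    intro t ht j hj
    obtain ⟨ht1, htT⟩ := Finset.mem_Icc.mp ht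
    have hmpos : (0:ℝ) < P.ms j t := by exact_mod_cast hms_pos j t ht1
    have hcf := abs_le.mp ((hconf t ht).2 j hj)
    have hmono : Real.sqrt (β * Real.log t / P.ms j t)
        ≤ Real.sqrt (P.alphas j * Real.log t / P.ms j t) := by
      apply Real.sqrt_le_sqrt
      exact (div_le_div_iff_of_pos_right hmpos).mpr
        (mul_le_mul_of_nonneg_right (le_of_lt (hαs j hj)) (hlog0 t ht1))
    rw [P.ask_def]
    linarith [hcf.2]
  -- width
  have hwidth_b : ∀ t ∈ Finset.Icc 1 T, ∀ i ∈ Finset.Icc 1 N,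
      P.bid i t ≤ P.B i + C * Real.sqrt (L / P.mb i t) := by
    intro t ht i hi
    obtain ⟨ht1, htT⟩ := Finset.mem_Icc.mp ht
    have hmpos : (0:ℝ) < P.mb i t := by exact_mod_cast hmb_pos i t ht1
    have hcf := abs_le.mp ((hconf t ht).1 i hi)
    have hle : Real.log t / (P.mb i t : ℝ) ≤ L / P.mb i t :=
      (div_le_div_iff_of_pos_right hmpos).mpr (hlogle t ht1 htT)
    have h2 : Real.sqrt (β * Real.log t / P.mb i t)
        ≤ Real.sqrt β * Real.sqrt (L / P.mb i t) := by
      rw [← Real.sqrt_mul hβ]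
      apply Real.sqrt_le_sqrt
      rw [mul_div_assoc]
      exact mul_le_mul_of_nonneg_left hle hβ
    have h3 : Real.sqrt (P.alphab i * Real.log t / P.mb i t)
        ≤ Real.sqrt αmax * Real.sqrt (L / P.mb i t) := by
      rw [← Real.sqrt_mul hαmax0]
      apply Real.sqrt_le_sqrt
      rw [mul_div_assoc]
      calc P.alphab i * (Real.log t / P.mb i t)
          ≤ αmax * (Real.log t / P.mb i t) := by
            apply mul_le_mul_of_nonneg_right (hαmax_b i hi)
            positivity
        _ ≤ αmax * (L / P.mb i t) := mul_le_mul_of_nonneg_left hle hαmax0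
    rw [P.bid_def, hC, add_mul]
    linarith [hcf.2, h2, h3]
  have hwidth_s : ∀ t ∈ Finset.Icc 1 T, ∀ j ∈ Finset.Icc 1 M,
      P.S j - C * Real.sqrt (L / P.ms j t) ≤ P.ask j t := by
    intro t ht j hj
    obtain ⟨ht1, htT⟩ := Finset.mem_Icc.mp ht
    have hmpos : (0:ℝ) < P.ms j t := by exact_mod_cast hms_pos j t ht1
    have hcf := abs_le.mp ((hconf t ht).2 j hj)
    have hle : Real.log t / (P.ms j t : ℝ) ≤ L / P.ms j t :=
      (div_le_div_iff_of_pos_right hmpos).mpr (hlogle t ht1 htT)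
    have h2 : Real.sqrt (β * Real.log t / P.ms j t)
        ≤ Real.sqrt β * Real.sqrt (L / P.ms j t) := by
      rw [← Real.sqrt_mul hβ]
      apply Real.sqrt_le_sqrt
      rw [mul_div_assoc]
      exact mul_le_mul_of_nonneg_left hle hβ
    have h3 : Real.sqrt (P.alphas j * Real.log t / P.ms j t)
        ≤ Real.sqrt αmax * Real.sqrt (L / P.ms j t) := by
      rw [← Real.sqrt_mul hαmax0]
      apply Real.sqrt_le_sqrt
      rw [mul_div_assoc]
      calc P.alphas j * (Real.log t / P.ms j t)
          ≤ αmax * (Real.log t / P.ms j t) := by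
            apply mul_le_mul_of_nonneg_right (hαmax_s j hj)
            positivity
        _ ≤ αmax * (L / P.ms j t) := mul_le_mul_of_nonneg_left hle hαmax0
    rw [P.ask_def, hC, add_mul]
    linarith [hcf.1, h2, h3]
  -- K* facts
  have hKfacts : K ≤ N ∧ K ≤ M ∧ (1 ≤ K → P.S K ≤ P.B K) := by
    rcases Nat.eq_zero_or_pos K with h0 | hpos
    · exact ⟨by omega, by omega, by omega⟩
    · have hbdd : BddAbove {k : ℕ | 1 ≤ k ∧ k ≤ min M N ∧ P.S k ≤ P.B k} :=
        ⟨min M N, fun k hk => hk.2.1⟩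
      have hne : {k : ℕ | 1 ≤ k ∧ k ≤ min M N ∧ P.S k ≤ P.B k}.Nonempty := by
        by_contra h
        rw [Set.not_nonempty_iff_eq_empty] at h
        rw [hKdef, Kstar, h] at hpos
        simp at hpos
      have hmem := Nat.sSup_mem hne hbdd
      rw [← Kstar, ← hKdef] at hmem
      exact ⟨le_trans hmem.2.1 (min_le_right _ _), le_trans hmem.2.1 (min_le_left _ _),
        fun _ => hmem.2.2⟩
  obtain ⟨hKN, hKM, hKBS⟩ := hKfacts
  -- break-even lower bound : K ≤ |Pb t|
  have hcard : ∀ t ∈ Finset.Icc 1 T, K ≤ (P.Pb t).card := by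
    intro t ht
    rcases Nat.eq_zero_or_pos K with h0 | hpos
    · omega
    obtain ⟨ht1, htT⟩ := Finset.mem_Icc.mp ht
    rw [P.card_breakEven t ht1 htT]
    set p : ℝ := P.S K with hp
    have hsub1 : Finset.Icc 1 K ⊆ (Finset.Icc 1 N).filter fun i => p ≤ P.bid i t := by
      intro i hi
      obtain ⟨hi1, hiK⟩ := Finset.mem_Icc.mp hi
      have hiN : i ∈ Finset.Icc 1 N := Finset.mem_Icc.mpr ⟨hi1, by omega⟩
      refine Finset.mem_filter.mpr ⟨hiN, ?_⟩
      calc p ≤ P.B K := hKBS hpos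
        _ ≤ P.B i := hBsort i K hi1 hiK hKN
        _ ≤ P.bid i t := hopt_b t ht i hiN
    have hsub2 : Finset.Icc 1 K ⊆ (Finset.Icc 1 M).filter fun j => P.ask j t ≤ p := by
      intro j hj
      obtain ⟨hj1, hjK⟩ := Finset.mem_Icc.mp hj
      have hjM : j ∈ Finset.Icc 1 M := Finset.mem_Icc.mpr ⟨hj1, by omega⟩
      refine Finset.mem_filter.mpr ⟨hjM, ?_⟩
      calc P.ask j t ≤ P.S j := hopt_s t ht j hjM
        _ ≤ P.S K := hSsort j K hj1 hjK hKM
    have hc1 : K ≤ ((Finset.Icc 1 N).filter fun i => p ≤ P.bid i t).card := by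
      have := Finset.card_le_card hsub1
      simpa using this
    have hc2 : K ≤ ((Finset.Icc 1 M).filter fun j => P.ask j t ≤ p).card := by
      have := Finset.card_le_card hsub2
      simpa using this
    have hbdd : BddAbove {k : ℕ | ∃ q : ℝ,
        k = min (((Finset.Icc 1 N).filter fun i => q ≤ P.bid i t).card)
                (((Finset.Icc 1 M).filter fun j => P.ask j t ≤ q).card)} := by
      refine ⟨N, fun k hk => ?_⟩
      obtain ⟨q, hq⟩ := hk
      calc k ≤ ((Finset.Icc 1 N).filter fun i => q ≤ P.bid i t).card := hq ▸ min_le_left _ _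
        _ ≤ (Finset.Icc 1 N).card := Finset.card_filter_le _ _
        _ = N := by simp
    have hmem : (min (((Finset.Icc 1 N).filter fun i => p ≤ P.bid i t).card)
        (((Finset.Icc 1 M).filter fun j => P.ask j t ≤ p).card)) ∈ {k : ℕ | ∃ q : ℝ,
        k = min (((Finset.Icc 1 N).filter fun i => q ≤ P.bid i t).card)
                (((Finset.Icc 1 M).filter fun j => P.ask j t ≤ q).card)} := ⟨p, rfl⟩
    exact le_trans (le_min hc1 hc2) (le_csSup hbdd hmem)
  -- card of round-sets vs counters
  have hSmax_b : ∀ (i : ℕ) (Sf : Finset ℕ) (hne : Sf.Nonempty), Sf ⊆ Finset.Icc 1 T →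
      (∀ u ∈ Sf, i ∈ P.Pb u) → Sf.card ≤ P.mb i (Sf.max' hne) := by
    intro i Sf hne hsub hmem
    set t := Sf.max' hne with htdef
    have htS : t ∈ Sf := Sf.max'_mem hne
    have ht1 : 1 ≤ t := (Finset.mem_Icc.mp (hsub htS)).1
    have hsub2 : Sf.erase t ⊆ (Finset.Ico 1 t).filter (fun u => i ∈ P.Pb u) := by
      intro u hu
      have hu' := Finset.mem_of_mem_erase hu
      have hne' := Finset.ne_of_mem_erase hu
      refine Finset.mem_filter.mpr ⟨Finset.mem_Ico.mpr
        ⟨(Finset.mem_Icc.mp (hsub hu')).1, lt_of_le_of_ne (Sf.le_max' u hu') hne'⟩, hmem u hu'⟩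
    have h1 := Finset.card_le_card hsub2
    have h2 := hmb_count i t ht1
    have h3 : (Sf.erase t).card = Sf.card - 1 := Finset.card_erase_of_mem htS
    have h4 : 1 ≤ Sf.card := Finset.card_pos.mpr hne
    omega
  have hSmax_s : ∀ (j : ℕ) (Sf : Finset ℕ) (hne : Sf.Nonempty), Sf ⊆ Finset.Icc 1 T →
      (∀ u ∈ Sf, j ∈ P.Ps u) → Sf.card ≤ P.ms j (Sf.max' hne) := by
    intro j Sf hne hsub hmem
    set t := Sf.max' hne with htdef
    have htS : t ∈ Sf := Sf.max'_mem hne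
    have ht1 : 1 ≤ t := (Finset.mem_Icc.mp (hsub htS)).1
    have hsub2 : Sf.erase t ⊆ (Finset.Ico 1 t).filter (fun u => j ∈ P.Ps u) := by
      intro u hu
      have hu' := Finset.mem_of_mem_erase hu
      have hne' := Finset.ne_of_mem_erase hu
      refine Finset.mem_filter.mpr ⟨Finset.mem_Ico.mpr
        ⟨(Finset.mem_Icc.mp (hsub hu')).1, lt_of_le_of_ne (Sf.le_max' u hu') hne'⟩, hmem u hu'⟩
    have h1 := Finset.card_le_card hsub2
    have h2 := hms_count j t ht1
    have h3 : (Sf.erase t).card = Sf.card - 1 := Finset.card_erase_of_mem htS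
    have h4 : 1 ≤ Sf.card := Finset.card_pos.mpr hne
    omega
  -- generic counting bound
  have hkey : ∀ (Δ D : ℝ) (Sf : Finset ℕ), 0 < Δ → 0 ≤ D →
      (Sf.Nonempty → Δ ≤ D * Real.sqrt (L / Sf.card)) →
      Δ * Sf.card ≤ D ^ 2 * L / Δ := by
    intro Δ D Sf hΔ hD hbound
    rcases Sf.eq_empty_or_nonempty with rfl | hne
    · simp only [Finset.card_empty, Nat.cast_zero, mul_zero]
      positivity
    · have hn : 1 ≤ Sf.card := Finset.card_pos.mpr hne
      have hnR : (0:ℝ) < Sf.card := by exact_mod_cast hn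
      have h1 := hbound hne
      have h2 : Δ * Δ ≤ D ^ 2 * (L / Sf.card) := by
        calc Δ * Δ ≤ (D * Real.sqrt (L / Sf.card)) * (D * Real.sqrt (L / Sf.card)) :=
              mul_le_mul h1 h1 (le_of_lt hΔ) (by positivity)
          _ = D ^ 2 * (Real.sqrt (L / Sf.card) * Real.sqrt (L / Sf.card)) := by ring
          _ = D ^ 2 * (L / Sf.card) := by rw [Real.mul_self_sqrt (by positivity)]
      rw [le_div_iff₀ hΔ]
      calc Δ * Sf.card * Δ = (Δ * Δ) * Sf.card := by ring
        _ ≤ (D ^ 2 * (L / Sf.card)) * Sf.card :=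
            mul_le_mul_of_nonneg_right h2 (le_of_lt hnR)
        _ = D ^ 2 * L := by field_simp
  -- per-pair bounds
  have hpairB : ∀ p ∈ Finset.Icc 1 K ×ˢ Finset.Icc (K + 1) N,
      (P.B p.1 - P.B p.2) *
        ((Finset.Icc 1 T).filter (fun t => p.1 ∉ P.Pb t ∧ p.2 ∈ P.Pb t)).card
      ≤ 4 * C ^ 2 * L * (1 / (P.B p.1 - P.B p.2)) := by
    rintro ⟨i, i'⟩ hp
    obtain ⟨hi, hi'⟩ := Finset.mem_product.mp hp
    have hΔ : 0 < P.B i - P.B i' := sub_pos.mpr (hgapb i hi i' hi')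
    set Sf := (Finset.Icc 1 T).filter (fun t => i ∉ P.Pb t ∧ i' ∈ P.Pb t) with hSf
    have hsub : Sf ⊆ Finset.Icc 1 T := Finset.filter_subset _ _
    have hbound : Sf.Nonempty → P.B i - P.B i' ≤ C * Real.sqrt (L / Sf.card) := by
      intro hne
      set t := Sf.max' hne with htdef
      have htS : t ∈ Sf := Sf.max'_mem hne
      have htIcc : t ∈ Finset.Icc 1 T := hsub htS
      obtain ⟨ht1, htT⟩ := Finset.mem_Icc.mp htIcc
      obtain ⟨hiout, hi'in⟩ := (Finset.mem_filter.mp htS).2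
      have hiN : i ∈ Finset.Icc 1 N := by
        rw [Finset.mem_Icc] at hi ⊢; omega
      have hi'N : i' ∈ Finset.Icc 1 N := by
        rw [Finset.mem_Icc] at hi' ⊢; omega
      have h1 : P.B i ≤ P.bid i t := hopt_b t htIcc i hiN
      have h2 : P.bid i t ≤ P.bid i' t := P.Pb_top t ht1 htT i' hi'in i hiN hiout
      have h3 : P.bid i' t ≤ P.B i' + C * Real.sqrt (L / P.mb i' t) :=
        hwidth_b t htIcc i' hi'N
      have hm : Sf.card ≤ P.mb i' t :=
        hSmax_b i' Sf hne hsub (fun u hu => (Finset.mem_filter.mp hu).2.2)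
      have hcpos : (0:ℝ) < Sf.card := by
        exact_mod_cast Finset.card_pos.mpr hne
      have hmR : (Sf.card : ℝ) ≤ P.mb i' t := by exact_mod_cast hm
      have h4 : Real.sqrt (L / P.mb i' t) ≤ Real.sqrt (L / Sf.card) := by
        apply Real.sqrt_le_sqrt
        apply div_le_div_of_nonneg_left hL0 hcpos hmR
      nlinarith [mul_le_mul_of_nonneg_left h4 hC0]
    have hk := hkey (P.B i - P.B i') C Sf hΔ hC0 hbound
    calc (P.B i - P.B i') * Sf.card ≤ C ^ 2 * L / (P.B i - P.B i') := hk
      _ ≤ 4 * C ^ 2 * L * (1 / (P.B i - P.B i')) := by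
          rw [mul_one_div, div_le_div_iff₀ hΔ hΔ]
          have hnn : 0 ≤ C ^ 2 * L := by positivity
          nlinarith [mul_nonneg hnn (le_of_lt hΔ)]
  have hpairS : ∀ p ∈ Finset.Icc 1 K ×ˢ Finset.Icc (K + 1) M,
      (P.S p.2 - P.S p.1) *
        ((Finset.Icc 1 T).filter (fun t => p.1 ∉ P.Ps t ∧ p.2 ∈ P.Ps t)).card
      ≤ 4 * C ^ 2 * L * (1 / (P.S p.2 - P.S p.1)) := by
    rintro ⟨j, j'⟩ hp
    obtain ⟨hj, hj'⟩ := Finset.mem_product.mp hp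
    have hΔ : 0 < P.S j' - P.S j := sub_pos.mpr (hgaps j hj j' hj')
    set Sf := (Finset.Icc 1 T).filter (fun t => j ∉ P.Ps t ∧ j' ∈ P.Ps t) with hSf
    have hsub : Sf ⊆ Finset.Icc 1 T := Finset.filter_subset _ _
    have hbound : Sf.Nonempty → P.S j' - P.S j ≤ C * Real.sqrt (L / Sf.card) := by
      intro hne
      set t := Sf.max' hne with htdef
      have htS : t ∈ Sf := Sf.max'_mem hne
      have htIcc : t ∈ Finset.Icc 1 T := hsub htS
      obtain ⟨ht1, htT⟩ := Finset.mem_Icc.mp htIcc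
      obtain ⟨hjout, hj'in⟩ := (Finset.mem_filter.mp htS).2
      have hjM : j ∈ Finset.Icc 1 M := by
        rw [Finset.mem_Icc] at hj ⊢; omega
      have hj'M : j' ∈ Finset.Icc 1 M := by
        rw [Finset.mem_Icc] at hj' ⊢; omega
      have h1 : P.ask j t ≤ P.S j := hopt_s t htIcc j hjM
      have h2 : P.ask j' t ≤ P.ask j t := P.Ps_bot t ht1 htT j' hj'in j hjM hjout
      have h3 : P.S j' - C * Real.sqrt (L / P.ms j' t) ≤ P.ask j' t :=
        hwidth_s t htIcc j' hj'M
      have hm : Sf.card ≤ P.ms j' t :=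
        hSmax_s j' Sf hne hsub (fun u hu => (Finset.mem_filter.mp hu).2.2)
      have hcpos : (0:ℝ) < Sf.card := by
        exact_mod_cast Finset.card_pos.mpr hne
      have hmR : (Sf.card : ℝ) ≤ P.ms j' t := by exact_mod_cast hm
      have h4 : Real.sqrt (L / P.ms j' t) ≤ Real.sqrt (L / Sf.card) := by
        apply Real.sqrt_le_sqrt
        apply div_le_div_of_nonneg_left hL0 hcpos hmR
      nlinarith [mul_le_mul_of_nonneg_left h4 hC0]
    have hk := hkey (P.S j' - P.S j) C Sf hΔ hC0 hbound
    calc (P.S j' - P.S j) * Sf.card ≤ C ^ 2 * L / (P.S j' - P.S j) := hk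
      _ ≤ 4 * C ^ 2 * L * (1 / (P.S j' - P.S j)) := by
          rw [mul_one_div, div_le_div_iff₀ hΔ hΔ]
          have hnn : 0 ≤ C ^ 2 * L := by positivity
          nlinarith [mul_nonneg hnn (le_of_lt hΔ)]
  have hpairX : ∀ p ∈ Finset.Icc (K + 1) N ×ˢ Finset.Icc (K + 1) M,
      (P.S p.2 - P.B p.1) *
        ((Finset.Icc 1 T).filter (fun t => p.1 ∈ P.Pb t ∧ p.2 ∈ P.Ps t)).card
      ≤ 4 * C ^ 2 * L * (1 / (P.S p.2 - P.B p.1)) := by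
    rintro ⟨i', j'⟩ hp
    obtain ⟨hi', hj'⟩ := Finset.mem_product.mp hp
    have hΔ : 0 < P.S j' - P.B i' := sub_pos.mpr (hgapbs i' hi' j' hj')
    set Sf := (Finset.Icc 1 T).filter (fun t => i' ∈ P.Pb t ∧ j' ∈ P.Ps t) with hSf
    have hsub : Sf ⊆ Finset.Icc 1 T := Finset.filter_subset _ _
    have hbound : Sf.Nonempty → P.S j' - P.B i' ≤ (2 * C) * Real.sqrt (L / Sf.card) := by
      intro hne
      set t := Sf.max' hne with htdef
      have htS : t ∈ Sf := Sf.max'_mem hne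
      have htIcc : t ∈ Finset.Icc 1 T := hsub htS
      obtain ⟨ht1, htT⟩ := Finset.mem_Icc.mp htIcc
      obtain ⟨hi'in, hj'in⟩ := (Finset.mem_filter.mp htS).2
      have hi'N : i' ∈ Finset.Icc 1 N := by
        rw [Finset.mem_Icc] at hi' ⊢; omega
      have hj'M : j' ∈ Finset.Icc 1 M := by
        rw [Finset.mem_Icc] at hj' ⊢; omega
      have h1 : P.S j' - C * Real.sqrt (L / P.ms j' t) ≤ P.ask j' t :=
        hwidth_s t htIcc j' hj'M
      have h2 : P.ask j' t ≤ P.bid i' t := P.price_ok t ht1 htT i' hi'in j' hj'in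
      have h3 : P.bid i' t ≤ P.B i' + C * Real.sqrt (L / P.mb i' t) :=
        hwidth_b t htIcc i' hi'N
      have hmb : Sf.card ≤ P.mb i' t :=
        hSmax_b i' Sf hne hsub (fun u hu => (Finset.mem_filter.mp hu).2.1)
      have hms : Sf.card ≤ P.ms j' t :=
        hSmax_s j' Sf hne hsub (fun u hu => (Finset.mem_filter.mp hu).2.2)
      have hcpos : (0:ℝ) < Sf.card := by
        exact_mod_cast Finset.card_pos.mpr hne
      have hmbR : (Sf.card : ℝ) ≤ P.mb i' t := by exact_mod_cast hmb
      have hmsR : (Sf.card : ℝ) ≤ P.ms j' t := by exact_mod_cast hms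
      have h4 : Real.sqrt (L / P.mb i' t) ≤ Real.sqrt (L / Sf.card) := by
        apply Real.sqrt_le_sqrt
        apply div_le_div_of_nonneg_left hL0 hcpos hmbR
      have h5 : Real.sqrt (L / P.ms j' t) ≤ Real.sqrt (L / Sf.card) := by
        apply Real.sqrt_le_sqrt
        apply div_le_div_of_nonneg_left hL0 hcpos hmsR
      nlinarith [mul_le_mul_of_nonneg_left h4 hC0, mul_le_mul_of_nonneg_left h5 hC0]
    have hk := hkey (P.S j' - P.B i') (2 * C) Sf hΔ (by positivity) hbound
    calc (P.S j' - P.B i') * Sf.card ≤ (2 * C) ^ 2 * L / (P.S j' - P.B i') := hk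
      _ = 4 * C ^ 2 * L * (1 / (P.S j' - P.B i')) := by
          rw [mul_one_div]; ring_nf
  -- per-round decomposition
  have hround : ∀ t ∈ Finset.Icc 1 T,
      ((∑ i ∈ Finset.Icc 1 K, P.B i + ∑ j ∈ Finset.Icc (K + 1) M, P.S j)
        - (∑ i ∈ P.Pb t, P.B i + ∑ j ∈ Finset.Icc 1 M \ P.Ps t, P.S j))
      ≤ (∑ p ∈ Finset.Icc 1 K ×ˢ Finset.Icc (K + 1) N,
            if p.1 ∉ P.Pb t ∧ p.2 ∈ P.Pb t then P.B p.1 - P.B p.2 else 0)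
        + (∑ p ∈ Finset.Icc 1 K ×ˢ Finset.Icc (K + 1) M,
            if p.1 ∉ P.Ps t ∧ p.2 ∈ P.Ps t then P.S p.2 - P.S p.1 else 0)
        + (∑ p ∈ Finset.Icc (K + 1) N ×ˢ Finset.Icc (K + 1) M,
            if p.1 ∈ P.Pb t ∧ p.2 ∈ P.Ps t then P.S p.2 - P.B p.1 else 0) := by
    intro t ht
    obtain ⟨ht1, htT⟩ := Finset.mem_Icc.mp ht
    set Ob := Finset.Icc 1 K \ P.Pb t with hOb
    set Xb := P.Pb t \ Finset.Icc 1 K with hXb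
    set Os := Finset.Icc 1 K \ P.Ps t with hOs
    set Xs := P.Ps t \ Finset.Icc 1 K with hXs
    have hKk : K ≤ (P.Pb t).card := hcard t ht
    have hkk : (P.Pb t).card = (P.Ps t).card := P.card_eq t ht1 htT
    have hb1 : (Finset.Icc 1 K ∩ P.Pb t).card + Ob.card = K := by
      rw [hOb]
      have h := Finset.card_inter_add_card_sdiff (Finset.Icc 1 K) (P.Pb t)
      rw [Nat.card_Icc] at h
      omega
    have hb2 : (Finset.Icc 1 K ∩ P.Pb t).card + Xb.card = (P.Pb t).card := by
      have h := Finset.card_inter_add_card_sdiff (P.Pb t) (Finset.Icc 1 K)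
      rwa [Finset.inter_comm] at h
    have hs1 : (Finset.Icc 1 K ∩ P.Ps t).card + Os.card = K := by
      rw [hOs]
      have h := Finset.card_inter_add_card_sdiff (Finset.Icc 1 K) (P.Ps t)
      rw [Nat.card_Icc] at h
      omega
    have hs2 : (Finset.Icc 1 K ∩ P.Ps t).card + Xs.card = (P.Ps t).card := by
      have h := Finset.card_inter_add_card_sdiff (P.Ps t) (Finset.Icc 1 K)
      rwa [Finset.inter_comm] at h
    have hObXb : Ob.card ≤ Xb.card := by omega
    have hOsXs : Os.card ≤ Xs.card := by omega
    obtain ⟨φ, hφinj, hφsub⟩ := aux_exists_injOn_image Ob Xb hObXb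
    obtain ⟨ψ, hψinj, hψsub⟩ := aux_exists_injOn_image Os Xs hOsXs
    set Yb := Ob.image φ with hYb
    set Ys := Os.image ψ with hYs
    have hYbcard : Yb.card = Ob.card := Finset.card_image_of_injOn hφinj
    have hYscard : Ys.card = Os.card := Finset.card_image_of_injOn hψinj
    set Xb' := Xb \ Yb with hXb'
    set Xs' := Xs \ Ys with hXs'
    have hXb'card : Xb'.card = Xb.card - Ob.card := by
      rw [Finset.card_sdiff_of_subset hφsub, hYbcard]
    have hXs'card : Xs'.card = Xs.card - Os.card := by
      rw [Finset.card_sdiff_of_subset hψsub, hYscard]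
    have hcard' : Xb'.card = Xs'.card := by omega
    obtain ⟨χ, hχinj, hχsub⟩ := aux_exists_injOn_image Xb' Xs' (le_of_eq hcard')
    have hχim : Xb'.image χ = Xs' := by
      apply Finset.eq_of_subset_of_card_le hχsub
      rw [Finset.card_image_of_injOn hχinj]
      omega
    -- sum identities
    have e1 : ∑ i ∈ Finset.Icc 1 K ∩ P.Pb t, P.B i + ∑ i ∈ Ob, P.B i
        = ∑ i ∈ Finset.Icc 1 K, P.B i := Finset.sum_inter_add_sum_sdiff _ _ _
    have e2 : ∑ i ∈ Finset.Icc 1 K ∩ P.Pb t, P.B i + ∑ i ∈ Xb, P.B i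
        = ∑ i ∈ P.Pb t, P.B i := by
      have h := Finset.sum_inter_add_sum_sdiff (P.Pb t) (Finset.Icc 1 K) P.B
      rwa [Finset.inter_comm] at h
    have e3 : ∑ j ∈ Finset.Icc 1 M \ P.Ps t, P.S j + ∑ j ∈ P.Ps t, P.S j
        = ∑ j ∈ Finset.Icc 1 M, P.S j := Finset.sum_sdiff (P.Ps_sub t)
    have e4 : ∑ j ∈ Finset.Icc 1 K, P.S j + ∑ j ∈ Finset.Icc (K + 1) M, P.S j
        = ∑ j ∈ Finset.Icc 1 M, P.S j := by
      rw [show Finset.Icc 1 K = Finset.Ioc 0 K from Finset.Icc_add_one_left_eq_Ioc 0 K,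
        show Finset.Icc (K + 1) M = Finset.Ioc K M from Finset.Icc_add_one_left_eq_Ioc K M,
        show Finset.Icc 1 M = Finset.Ioc 0 M from Finset.Icc_add_one_left_eq_Ioc 0 M]
      exact Finset.sum_Ioc_consecutive _ (Nat.zero_le K) hKM
    have e5 : ∑ j ∈ Finset.Icc 1 K ∩ P.Ps t, P.S j + ∑ j ∈ Xs, P.S j
        = ∑ j ∈ P.Ps t, P.S j := by
      have h := Finset.sum_inter_add_sum_sdiff (P.Ps t) (Finset.Icc 1 K) P.S
      rwa [Finset.inter_comm] at h
    have e6 : ∑ j ∈ Finset.Icc 1 K ∩ P.Ps t, P.S j + ∑ j ∈ Os, P.S j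
        = ∑ j ∈ Finset.Icc 1 K, P.S j := Finset.sum_inter_add_sum_sdiff _ _ _
    have e7 : ∑ i ∈ Xb', P.B i + ∑ i ∈ Yb, P.B i = ∑ i ∈ Xb, P.B i :=
      Finset.sum_sdiff hφsub
    have e8 : ∑ i ∈ Yb, P.B i = ∑ i ∈ Ob, P.B (φ i) :=
      Finset.sum_image (fun x hx y hy h => hφinj hx hy h)
    have e9 : ∑ j ∈ Xs', P.S j + ∑ j ∈ Ys, P.S j = ∑ j ∈ Xs, P.S j :=
      Finset.sum_sdiff hψsub
    have e10 : ∑ j ∈ Ys, P.S j = ∑ j ∈ Os, P.S (ψ j) :=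
      Finset.sum_image (fun x hx y hy h => hψinj hx hy h)
    have e11 : ∑ j ∈ Xs', P.S j = ∑ i ∈ Xb', P.S (χ i) := by
      rw [← hχim]
      exact Finset.sum_image (fun x hx y hy h => hχinj hx hy h)
    have hdecomp : ((∑ i ∈ Finset.Icc 1 K, P.B i + ∑ j ∈ Finset.Icc (K + 1) M, P.S j)
        - (∑ i ∈ P.Pb t, P.B i + ∑ j ∈ Finset.Icc 1 M \ P.Ps t, P.S j))
        = ∑ i ∈ Ob, (P.B i - P.B (φ i)) + ∑ j ∈ Os, (P.S (ψ j) - P.S j)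
          + ∑ i ∈ Xb', (P.S (χ i) - P.B i) := by
      rw [Finset.sum_sub_distrib, Finset.sum_sub_distrib, Finset.sum_sub_distrib, ← e8, ← e10, ← e11]
      linarith [e1, e2, e3, e4, e5, e6, e7, e9]
    rw [hdecomp]
    -- bound each of the three parts
    have hXbsub : Xb ⊆ Finset.Icc (K + 1) N := by
      intro x hx
      obtain ⟨hxP, hxK⟩ := Finset.mem_sdiff.mp hx
      have := Finset.mem_Icc.mp (P.Pb_sub t hxP)
      rw [Finset.mem_Icc] at hxK ⊢
      omega
    have hXssub : Xs ⊆ Finset.Icc (K + 1) M := by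
      intro x hx
      obtain ⟨hxP, hxK⟩ := Finset.mem_sdiff.mp hx
      have := Finset.mem_Icc.mp (P.Ps_sub t hxP)
      rw [Finset.mem_Icc] at hxK ⊢
      omega
    have hbpart : ∑ i ∈ Ob, (P.B i - P.B (φ i))
        ≤ ∑ p ∈ Finset.Icc 1 K ×ˢ Finset.Icc (K + 1) N,
            if p.1 ∉ P.Pb t ∧ p.2 ∈ P.Pb t then P.B p.1 - P.B p.2 else 0 := by
      have himg : ∑ i ∈ Ob, (P.B i - P.B (φ i))
          = ∑ p ∈ Ob.image (fun i => (i, φ i)), (P.B p.1 - P.B p.2) := by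
        rw [Finset.sum_image (fun x _ y _ h => (Prod.mk.injEq _ _ _ _).mp h |>.1)]
      rw [himg, ← Finset.sum_filter]
      apply Finset.sum_le_sum_of_subset_of_nonneg
      · intro p hp
        obtain ⟨i, hi, rfl⟩ := Finset.mem_image.mp hp
        obtain ⟨hiK, hiout⟩ := Finset.mem_sdiff.mp hi
        have hφi : φ i ∈ Xb := hφsub (Finset.mem_image_of_mem φ hi)
        refine Finset.mem_filter.mpr ⟨Finset.mem_product.mpr ⟨hiK, hXbsub hφi⟩,
          hiout, (Finset.mem_sdiff.mp hφi).1⟩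
      · intro p hp _
        obtain ⟨hpP, _⟩ := Finset.mem_filter.mp hp
        obtain ⟨h1, h2⟩ := Finset.mem_product.mp hpP
        exact le_of_lt (sub_pos.mpr (hgapb p.1 h1 p.2 h2))
    have hspart : ∑ j ∈ Os, (P.S (ψ j) - P.S j)
        ≤ ∑ p ∈ Finset.Icc 1 K ×ˢ Finset.Icc (K + 1) M,
            if p.1 ∉ P.Ps t ∧ p.2 ∈ P.Ps t then P.S p.2 - P.S p.1 else 0 := by
      have himg : ∑ j ∈ Os, (P.S (ψ j) - P.S j)
          = ∑ p ∈ Os.image (fun j => (j, ψ j)), (P.S p.2 - P.S p.1) := by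
        rw [Finset.sum_image (fun x _ y _ h => (Prod.mk.injEq _ _ _ _).mp h |>.1)]
      rw [himg, ← Finset.sum_filter]
      apply Finset.sum_le_sum_of_subset_of_nonneg
      · intro p hp
        obtain ⟨j, hj, rfl⟩ := Finset.mem_image.mp hp
        obtain ⟨hjK, hjout⟩ := Finset.mem_sdiff.mp hj
        have hψj : ψ j ∈ Xs := hψsub (Finset.mem_image_of_mem ψ hj)
        refine Finset.mem_filter.mpr ⟨Finset.mem_product.mpr ⟨hjK, hXssub hψj⟩,
          hjout, (Finset.mem_sdiff.mp hψj).1⟩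
      · intro p hp _
        obtain ⟨hpP, _⟩ := Finset.mem_filter.mp hp
        obtain ⟨h1, h2⟩ := Finset.mem_product.mp hpP
        exact le_of_lt (sub_pos.mpr (hgaps p.1 h1 p.2 h2))
    have hxpart : ∑ i ∈ Xb', (P.S (χ i) - P.B i)
        ≤ ∑ p ∈ Finset.Icc (K + 1) N ×ˢ Finset.Icc (K + 1) M,
            if p.1 ∈ P.Pb t ∧ p.2 ∈ P.Ps t then P.S p.2 - P.B p.1 else 0 := by
      have himg : ∑ i ∈ Xb', (P.S (χ i) - P.B i)
          = ∑ p ∈ Xb'.image (fun i => (i, χ i)), (P.S p.2 - P.B p.1) := by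
        rw [Finset.sum_image (fun x _ y _ h => (Prod.mk.injEq _ _ _ _).mp h |>.1)]
      rw [himg, ← Finset.sum_filter]
      apply Finset.sum_le_sum_of_subset_of_nonneg
      · intro p hp
        obtain ⟨i, hi, rfl⟩ := Finset.mem_image.mp hp
        have hiXb : i ∈ Xb := (Finset.mem_sdiff.mp hi).1
        have hχi : χ i ∈ Xs' := by
          rw [← hχim]; exact Finset.mem_image_of_mem χ hi
        have hχiXs : χ i ∈ Xs := (Finset.mem_sdiff.mp hχi).1
        refine Finset.mem_filter.mpr ⟨Finset.mem_product.mpr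
          ⟨hXbsub hiXb, hXssub hχiXs⟩,
          (Finset.mem_sdiff.mp hiXb).1, (Finset.mem_sdiff.mp hχiXs).1⟩
      · intro p hp _
        obtain ⟨hpP, _⟩ := Finset.mem_filter.mp hp
        obtain ⟨h1, h2⟩ := Finset.mem_product.mp hpP
        exact le_of_lt (sub_pos.mpr (hgapbs p.1 h1 p.2 h2))
    linarith [hbpart, hspart, hxpart]
  -- assembly
  refine le_trans (Finset.sum_le_sum hround) ?_
  rw [Finset.sum_add_distrib, Finset.sum_add_distrib]
  have hB : ∑ t ∈ Finset.Icc 1 T, ∑ p ∈ Finset.Icc 1 K ×ˢ Finset.Icc (K + 1) N,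
        (if p.1 ∉ P.Pb t ∧ p.2 ∈ P.Pb t then P.B p.1 - P.B p.2 else 0)
      = ∑ p ∈ Finset.Icc 1 K ×ˢ Finset.Icc (K + 1) N, (P.B p.1 - P.B p.2) *
          ((Finset.Icc 1 T).filter (fun t => p.1 ∉ P.Pb t ∧ p.2 ∈ P.Pb t)).card := by
    rw [Finset.sum_comm]
    refine Finset.sum_congr rfl (fun p hp => ?_)
    rw [← Finset.sum_filter, Finset.sum_const, nsmul_eq_mul, mul_comm]
  have hS : ∑ t ∈ Finset.Icc 1 T, ∑ p ∈ Finset.Icc 1 K ×ˢ Finset.Icc (K + 1) M,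
        (if p.1 ∉ P.Ps t ∧ p.2 ∈ P.Ps t then P.S p.2 - P.S p.1 else 0)
      = ∑ p ∈ Finset.Icc 1 K ×ˢ Finset.Icc (K + 1) M, (P.S p.2 - P.S p.1) *
          ((Finset.Icc 1 T).filter (fun t => p.1 ∉ P.Ps t ∧ p.2 ∈ P.Ps t)).card := by
    rw [Finset.sum_comm]
    refine Finset.sum_congr rfl (fun p hp => ?_)
    rw [← Finset.sum_filter, Finset.sum_const, nsmul_eq_mul, mul_comm]
  have hX : ∑ t ∈ Finset.Icc 1 T, ∑ p ∈ Finset.Icc (K + 1) N ×ˢ Finset.Icc (K + 1) M,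
        (if p.1 ∈ P.Pb t ∧ p.2 ∈ P.Ps t then P.S p.2 - P.B p.1 else 0)
      = ∑ p ∈ Finset.Icc (K + 1) N ×ˢ Finset.Icc (K + 1) M, (P.S p.2 - P.B p.1) *
          ((Finset.Icc 1 T).filter (fun t => p.1 ∈ P.Pb t ∧ p.2 ∈ P.Ps t)).card := by
    rw [Finset.sum_comm]
    refine Finset.sum_congr rfl (fun p hp => ?_)
    rw [← Finset.sum_filter, Finset.sum_const, nsmul_eq_mul, mul_comm]
  rw [hB, hS, hX]
  have h1 := Finset.sum_le_sum hpairB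
  have h2 := Finset.sum_le_sum hpairS
  have h3 := Finset.sum_le_sum hpairX
  have hR1 : ∑ i ∈ Finset.Icc 1 K, ∑ i' ∈ Finset.Icc (K + 1) N, 1 / (P.B i - P.B i')
      = ∑ p ∈ Finset.Icc 1 K ×ˢ Finset.Icc (K + 1) N, 1 / (P.B p.1 - P.B p.2) :=
    by rw [Finset.sum_product]
  have hR2 : ∑ j ∈ Finset.Icc 1 K, ∑ j' ∈ Finset.Icc (K + 1) M, 1 / (P.S j' - P.S j)
      = ∑ p ∈ Finset.Icc 1 K ×ˢ Finset.Icc (K + 1) M, 1 / (P.S p.2 - P.S p.1) :=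
    by rw [Finset.sum_product]
  have hR3 : ∑ i' ∈ Finset.Icc (K + 1) N, ∑ j' ∈ Finset.Icc (K + 1) M, 1 / (P.S j' - P.B i')
      = ∑ p ∈ Finset.Icc (K + 1) N ×ˢ Finset.Icc (K + 1) M, 1 / (P.S p.2 - P.B p.1) :=
    by rw [Finset.sum_product]
  rw [hR1, hR2, hR3, mul_add, mul_add, Finset.mul_sum, Finset.mul_sum, Finset.mul_sum]
  exact add_le_add (add_le_add h1 h2) h3
end

section
/- Regret of a buyer over its participation rounds under the confidence event (used for non-participating buyers in Theorem 2): run the UCB/LCB average-mechanism protocol over rounds t = 1,…,T and assume the confidence event with parameter β ≥ 0 holds at every round t ∈ {1,…,T}, with α_{b,i} ≥ β for the fixed buyer i. Then Σ over all rounds t ∈ {1,…,T} with i ∈ P_b(t) of (p(t) − B_i) is at most 2·(√α_{b,i} + √β)·√(m_{b,i}(T+1)·log T), where p(t) = (min_{i'∈P_b(t)} b_{i'}(t) + max_{j∈P_s(t)} s_j(t))/2 is the round-t price. -/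
lemma aux_one_div_sqrt_le (k : ℝ) (hk : 1 ≤ k) :
    1 / Real.sqrt k ≤ 2 * (Real.sqrt k - Real.sqrt (k - 1)) := by
  have h0 : (0:ℝ) < k := by linarith
  have hs : 0 < Real.sqrt k := Real.sqrt_pos.2 h0
  have h1 : Real.sqrt k ^ 2 = k := Real.sq_sqrt h0.le
  have h2 : Real.sqrt (k-1) ^ 2 = k - 1 := Real.sq_sqrt (by linarith)
  have h3 : 0 ≤ Real.sqrt (k-1) := Real.sqrt_nonneg _
  rw [div_le_iff₀ hs]
  nlinarith [sq_nonneg (Real.sqrt k - Real.sqrt (k-1))]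

lemma aux_telescope (f : ℕ → ℝ) (T : ℕ) :
    ∑ t ∈ Finset.Icc 1 T, (f (t+1) - f t) = f (T+1) - f 1 := by
  induction T with
  | zero => simp
  | succ n ih =>
      rw [Finset.sum_Icc_succ_top (by omega : 1 ≤ n + 1), ih]
      ring

lemma aux_mb_ge_one {N M T : ℕ} (P : DAProtocol N M T) (i : ℕ) :
    ∀ t, 1 ≤ t → 1 ≤ P.mb i t := by
  intro t ht
  induction t with
  | zero => omega
  | succ n ih =>
      rcases Nat.eq_or_lt_of_le ht with h | h
      · rw [← h, P.mb_one]
      · have hn : 1 ≤ n := by omega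
        rw [P.mb_succ i n hn]
        have := ih hn
        split <;> omega

/-- Regret of a buyer over its participation rounds under the
confidence event: if the confidence event with parameter `β` holds at every round and
`alphab i ≥ β`, then the cumulative excess of the trading price over buyer `i`'s
valuation, summed over the rounds in which buyer `i` participates, is at most
`2·(√(alphab i) + √β)·√(mb i (T+1)·log T)`. -/
theorem stmt_13 (N M T : ℕ) (hN : 1 ≤ N) (hM : 1 ≤ M) (hT : 1 ≤ T)
    (P : DAProtocol N M T)
    (hBsort : ∀ i i', 1 ≤ i → i ≤ i' → i' ≤ N → P.B i' ≤ P.B i)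
    (hSsort : ∀ j j', 1 ≤ j → j ≤ j' → j' ≤ M → P.S j ≤ P.S j')
    (β : ℝ) (hβ : 0 ≤ β)
    (hconf : ∀ t ∈ Finset.Icc 1 T, P.ConfEvent β t)
    (i : ℕ) (hi : i ∈ Finset.Icc 1 N) (hαi : β ≤ P.alphab i) :
    ∑ t ∈ (Finset.Icc 1 T).filter (fun t => i ∈ P.Pb t), (P.price t - P.B i)
      ≤ 2 * (Real.sqrt (P.alphab i) + Real.sqrt β) *
        Real.sqrt ((P.mb i (T + 1) : ℝ) * Real.log T) := by
  set α := P.alphab i with hα_def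
  have hα : 0 ≤ α := hβ.trans hαi
  have hlogT : 0 ≤ Real.log T := Real.log_nonneg (by exact_mod_cast hT)
  set C : ℝ := (Real.sqrt α + Real.sqrt β) * Real.sqrt (Real.log T) with hC_def
  have hC : 0 ≤ C := by positivity
  set g : ℕ → ℝ := fun t => 2 * Real.sqrt ((P.mb i t : ℝ) - 1) with hg_def
  -- monotonicity of g
  have hmono : ∀ t, 1 ≤ t → g t ≤ g (t+1) := by
    intro t ht
    have h1 : P.mb i t ≤ P.mb i (t+1) := by
      rw [P.mb_succ i t ht]; split <;> omega
    have h2 : ((P.mb i t : ℝ) - 1) ≤ ((P.mb i (t+1) : ℝ) - 1) := by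
      have := (Nat.cast_le (α := ℝ)).2 h1; linarith
    simp only [hg_def]
    have := Real.sqrt_le_sqrt h2
    linarith
  -- per-round bound
  have key : ∀ t, 1 ≤ t → t ≤ T → i ∈ P.Pb t →
      P.price t - P.B i ≤ C * (g (t+1) - g t) := by
    intro t ht1 ht2 hiPb
    have htIcc : t ∈ Finset.Icc 1 T := Finset.mem_Icc.2 ⟨ht1, ht2⟩
    have hmb1 : 1 ≤ P.mb i t := aux_mb_ge_one P i t ht1
    set k : ℝ := (P.mb i t : ℝ) with hk_def
    have hk1 : 1 ≤ k := by rw [hk_def]; exact_mod_cast hmb1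
    have hk0 : 0 < k := by linarith
    have hks : 0 < Real.sqrt k := Real.sqrt_pos.2 hk0
    -- price ≤ bid i t
    have hprice : P.price t ≤ P.bid i t := by
      have hSbne : ((fun i' => P.bid i' t) '' ↑(P.Pb t)).Nonempty :=
        ⟨P.bid i t, Set.mem_image_of_mem _ (by simpa using hiPb)⟩
      have hSbfin : ((fun i' => P.bid i' t) '' ↑(P.Pb t)).Finite :=
        ((P.Pb t).finite_toSet).image _
      have hPsne : (P.Ps t).Nonempty := by
        rw [← Finset.card_pos, ← P.card_eq t ht1 ht2]
        exact Finset.card_pos.2 ⟨i, hiPb⟩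
      have hSsne : ((fun j => P.ask j t) '' ↑(P.Ps t)).Nonempty :=
        ⟨P.ask hPsne.choose t, Set.mem_image_of_mem _ (by simpa using hPsne.choose_spec)⟩
      have h1 : sInf ((fun i' => P.bid i' t) '' ↑(P.Pb t)) ≤ P.bid i t :=
        csInf_le hSbfin.bddBelow (Set.mem_image_of_mem _ (by simpa using hiPb))
      have h2 : sSup ((fun j => P.ask j t) '' ↑(P.Ps t)) ≤
          sInf ((fun i' => P.bid i' t) '' ↑(P.Pb t)) := by
        apply csSup_le hSsne
        rintro x ⟨j, hj, rfl⟩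
        apply le_csInf hSbne
        rintro y ⟨i', hi', rfl⟩
        exact P.price_ok t ht1 ht2 i' (by simpa using hi') j (by simpa using hj)
      unfold DAProtocol.price
      linarith
    -- confidence bound on bhat
    have hconf' := (hconf t htIcc).1 i hi
    have hbhat : P.bhat i t ≤ P.B i + Real.sqrt (β * Real.log t / k) := by
      have := abs_le.1 hconf'
      rw [hk_def]; linarith [this.2]
    have hlogt : Real.log t ≤ Real.log T := by
      apply Real.log_le_log (by exact_mod_cast ht1)
      exact_mod_cast ht2
    have hbound : ∀ γ : ℝ, 0 ≤ γ → Real.sqrt (γ * Real.log t / k) ≤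
        Real.sqrt γ * Real.sqrt (Real.log T) / Real.sqrt k := by
      intro γ hγ
      rw [← Real.sqrt_mul hγ, ← Real.sqrt_div (by positivity)]
      apply Real.sqrt_le_sqrt
      gcongr
    -- bid bound
    have hbid : P.bid i t ≤ P.B i + C / Real.sqrt k := by
      rw [P.bid_def i t]
      have h1 := hbound β hβ
      have h2 := hbound α hα
      have h3 : Real.sqrt (P.alphab i * Real.log t / (P.mb i t : ℝ))
          = Real.sqrt (α * Real.log t / k) := by rw [hα_def, hk_def]
      rw [h3]
      have hCk : C / Real.sqrt k =
          Real.sqrt β * Real.sqrt (Real.log T) / Real.sqrt k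
          + Real.sqrt α * Real.sqrt (Real.log T) / Real.sqrt k := by
        rw [hC_def]; ring
      rw [hCk]
      linarith
    -- 1/√k ≤ g(t+1) - g t
    have hg : 1 / Real.sqrt k ≤ g (t+1) - g t := by
      have hsucc : P.mb i (t+1) = P.mb i t + 1 := by
        rw [P.mb_succ i t ht1, if_pos hiPb]
      simp only [hg_def, hsucc]
      push_cast
      have h4 : ((P.mb i t : ℝ) + 1 - 1) = k := by rw [hk_def]; ring
      rw [h4]
      have := aux_one_div_sqrt_le k hk1
      linarith
    calc P.price t - P.B i ≤ C / Real.sqrt k := by linarith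
      _ = C * (1 / Real.sqrt k) := by ring
      _ ≤ C * (g (t+1) - g t) := mul_le_mul_of_nonneg_left hg hC
  -- sum up
  have step1 : ∑ t ∈ (Finset.Icc 1 T).filter (fun t => i ∈ P.Pb t), (P.price t - P.B i)
      ≤ ∑ t ∈ (Finset.Icc 1 T).filter (fun t => i ∈ P.Pb t), C * (g (t+1) - g t) := by
    apply Finset.sum_le_sum
    intro t ht
    rw [Finset.mem_filter, Finset.mem_Icc] at ht
    exact key t ht.1.1 ht.1.2 ht.2
  have step2 : ∑ t ∈ (Finset.Icc 1 T).filter (fun t => i ∈ P.Pb t), C * (g (t+1) - g t)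
      ≤ ∑ t ∈ Finset.Icc 1 T, C * (g (t+1) - g t) := by
    apply Finset.sum_le_sum_of_subset_of_nonneg (Finset.filter_subset _ _)
    intro t ht _
    rw [Finset.mem_Icc] at ht
    have h5 := hmono t ht.1
    have h6 : 0 ≤ g (t+1) - g t := by linarith
    positivity
  have step3 : ∑ t ∈ Finset.Icc 1 T, C * (g (t+1) - g t) = C * (g (T+1) - g 1) := by
    rw [← Finset.mul_sum, aux_telescope g T]
  have hg1 : g 1 = 0 := by simp [hg_def, P.mb_one]
  have hgT : g (T+1) ≤ 2 * Real.sqrt ((P.mb i (T+1) : ℝ)) := by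
    simp only [hg_def]
    have := Real.sqrt_le_sqrt (by linarith : ((P.mb i (T+1) : ℝ) - 1) ≤ (P.mb i (T+1) : ℝ))
    linarith
  have hfinal : C * (g (T+1) - g 1) ≤ 2 * (Real.sqrt α + Real.sqrt β) *
      Real.sqrt ((P.mb i (T + 1) : ℝ) * Real.log T) := by
    rw [hg1, sub_zero]
    have hrw : Real.sqrt ((P.mb i (T + 1) : ℝ) * Real.log T)
        = Real.sqrt ((P.mb i (T+1) : ℝ)) * Real.sqrt (Real.log T) :=
      Real.sqrt_mul (by positivity) _
    rw [hrw]
    have h1 : C * g (T+1) ≤ C * (2 * Real.sqrt ((P.mb i (T+1) : ℝ))) :=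
      mul_le_mul_of_nonneg_left hgT hC
    calc C * g (T+1) ≤ C * (2 * Real.sqrt ((P.mb i (T+1) : ℝ))) := h1
      _ = 2 * (Real.sqrt α + Real.sqrt β) *
          (Real.sqrt ((P.mb i (T+1) : ℝ)) * Real.sqrt (Real.log T)) := by
        rw [hC_def]; ring
  linarith
end

section
/- Regret of a seller over its participation rounds under the confidence event (used for non-participating sellers in Theorem 2): run the UCB/LCB average-mechanism protocol over rounds t = 1,…,T and assume the confidence event with parameter β ≥ 0 holds at every round t ∈ {1,…,T}, with α_{s,j} ≥ β for the fixed seller j. Then Σ over all rounds t ∈ {1,…,T} with j ∈ P_s(t) of (S_j − p(t)) is at most 2·(√α_{s,j} + √β)·√(m_{s,j}(T+1)·log T), where p(t) = (min_{i∈P_b(t)} b_i(t) + max_{j'∈P_s(t)} s_{j'}(t))/2 is the round-t price. -/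
lemma sum_one_div_sqrt_le (K : ℕ) :
    ∑ k ∈ Finset.Icc 1 K, (1 / Real.sqrt k) ≤ 2 * Real.sqrt K := by
  induction K with
  | zero => simp
  | succ K ih =>
    rw [Finset.sum_Icc_succ_top (by omega)]
    have hb : Real.sqrt (K + 1 : ℕ) = Real.sqrt ((K : ℝ) + 1) := by push_cast; ring_nf
    have ha0 : (0:ℝ) ≤ Real.sqrt K := Real.sqrt_nonneg _
    have hb0 : (0:ℝ) < Real.sqrt ((K:ℝ) + 1) := Real.sqrt_pos.2 (by positivity)
    have ha2 : Real.sqrt K ^ 2 = (K:ℝ) := Real.sq_sqrt (by positivity)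
    have hb2 : Real.sqrt ((K:ℝ) + 1) ^ 2 = (K:ℝ) + 1 := Real.sq_sqrt (by positivity)
    have key : 1 / Real.sqrt ((K:ℝ) + 1) ≤
        2 * Real.sqrt ((K:ℝ) + 1) - 2 * Real.sqrt K := by
      rw [div_le_iff₀ hb0]
      nlinarith [sq_nonneg (Real.sqrt ((K:ℝ)+1) - Real.sqrt K)]
    rw [hb]
    linarith
lemma ms_mono {N M T : ℕ} (P : DAProtocol N M T) (j : ℕ) :
    ∀ t t', 1 ≤ t → t ≤ t' → P.ms j t ≤ P.ms j t' := by
  intro t t' ht htt'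
  induction t' with
  | zero => omega
  | succ u ih =>
    rcases Nat.lt_or_ge t (u+1) with h | h
    · have hu : 1 ≤ u := by omega
      have := ih (by omega)
      rw [P.ms_succ j u hu]
      split <;> omega
    · have : t = u + 1 := by omega
      rw [this]
lemma ms_pos {N M T : ℕ} (P : DAProtocol N M T) (j : ℕ) {t : ℕ} (ht : 1 ≤ t) :
    1 ≤ P.ms j t := by
  have := ms_mono P j 1 t le_rfl ht
  rw [P.ms_one] at this; omega

/-- Regret of a seller over its participation rounds under the
confidence event: if the confidence event with parameter `β` holds at every round and
`alphas j ≥ β`, then the cumulative shortfall of the trading price below seller `j`'s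
valuation, summed over the rounds in which seller `j` participates, is at most
`2·(√(alphas j) + √β)·√(ms j (T+1)·log T)`. -/
theorem stmt_14 (N M T : ℕ) (hN : 1 ≤ N) (hM : 1 ≤ M) (hT : 1 ≤ T)
    (P : DAProtocol N M T)
    (hBsort : ∀ i i', 1 ≤ i → i ≤ i' → i' ≤ N → P.B i' ≤ P.B i)
    (hSsort : ∀ j j', 1 ≤ j → j ≤ j' → j' ≤ M → P.S j ≤ P.S j')
    (β : ℝ) (hβ : 0 ≤ β)
    (hconf : ∀ t ∈ Finset.Icc 1 T, P.ConfEvent β t)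
    (j : ℕ) (hj : j ∈ Finset.Icc 1 M) (hαj : β ≤ P.alphas j) :
    ∑ t ∈ (Finset.Icc 1 T).filter (fun t => j ∈ P.Ps t), (P.S j - P.price t)
      ≤ 2 * (Real.sqrt (P.alphas j) + Real.sqrt β) *
        Real.sqrt ((P.ms j (T + 1) : ℝ) * Real.log T) := by

  set α := P.alphas j with hαdef
  have hα0 : 0 ≤ α := le_trans hβ hαj
  have hlogT : 0 ≤ Real.log T := Real.log_nonneg (by exact_mod_cast hT)
  set F := (Finset.Icc 1 T).filter (fun t => j ∈ P.Ps t) with hFdef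
  have key : ∀ t ∈ F, P.S j - P.price t ≤
      ((Real.sqrt α + Real.sqrt β) * Real.sqrt (Real.log T)) *
        (1 / Real.sqrt (P.ms j t)) := by
    intro t htF
    simp only [hFdef, Finset.mem_filter, Finset.mem_Icc] at htF
    obtain ⟨⟨ht1, htT⟩, hjP⟩ := htF
    have hm1 : 1 ≤ P.ms j t := ms_pos P j ht1
    have hmpos : (0:ℝ) < (P.ms j t : ℝ) := by exact_mod_cast hm1
    have hconf' := (hconf t (Finset.mem_Icc.2 ⟨ht1, htT⟩)).2 j hj
    have hPsne : (P.Ps t).Nonempty := ⟨j, hjP⟩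
    have hPbne : (P.Pb t).Nonempty := by
      rw [← Finset.card_pos, P.card_eq t ht1 htT, Finset.card_pos]; exact hPsne
    have hAne : ((fun j' => P.ask j' t) '' ↑(P.Ps t)).Nonempty :=
      ⟨_, Set.mem_image_of_mem _ hjP⟩
    have hBne : ((fun i => P.bid i t) '' ↑(P.Pb t)).Nonempty := by
      obtain ⟨i, hi⟩ := hPbne; exact ⟨_, Set.mem_image_of_mem _ hi⟩
    have hAbdd : BddAbove ((fun j' => P.ask j' t) '' ↑(P.Ps t)) :=
      ((P.Ps t).finite_toSet.image _).bddAbove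
    have h1 : P.ask j t ≤ sSup ((fun j' => P.ask j' t) '' ↑(P.Ps t)) :=
      le_csSup hAbdd (Set.mem_image_of_mem _ hjP)
    have h2 : sSup ((fun j' => P.ask j' t) '' ↑(P.Ps t)) ≤
        sInf ((fun i => P.bid i t) '' ↑(P.Pb t)) := by
      apply csSup_le hAne
      rintro a ⟨j', hj', rfl⟩
      apply le_csInf hBne
      rintro b ⟨i, hi, rfl⟩
      exact P.price_ok t ht1 htT i hi j' hj'
    have hprice : P.ask j t ≤ P.price t := by
      unfold DAProtocol.price; linarith
    have hlogt : Real.log t ≤ Real.log T := by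
      have : (t:ℝ) ≤ (T:ℝ) := by exact_mod_cast htT
      exact Real.log_le_log (by exact_mod_cast ht1) this
    have hlogt0 : 0 ≤ Real.log t := Real.log_nonneg (by exact_mod_cast ht1)
    have hcast : ∀ c : ℝ, 0 ≤ c → Real.sqrt (c * Real.log t / (P.ms j t)) ≤
        Real.sqrt c * (Real.sqrt (Real.log T) / Real.sqrt (P.ms j t)) := by
      intro c hc
      calc Real.sqrt (c * Real.log t / (P.ms j t))
          ≤ Real.sqrt (c * Real.log T / (P.ms j t)) := by
            apply Real.sqrt_le_sqrt; gcongr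
        _ = Real.sqrt c * (Real.sqrt (Real.log T) / Real.sqrt (P.ms j t)) := by
            rw [mul_div_assoc, Real.sqrt_mul hc, Real.sqrt_div hlogT]
    have habs : P.S j - P.shat j t ≤ Real.sqrt (β * Real.log t / P.ms j t) := by
      have := abs_le.1 hconf'; linarith [this.1, this.2]
    calc P.S j - P.price t ≤ P.S j - P.ask j t := by linarith
      _ = (P.S j - P.shat j t) + Real.sqrt (α * Real.log t / P.ms j t) := by
          rw [P.ask_def]; ring
      _ ≤ Real.sqrt β * (Real.sqrt (Real.log T) / Real.sqrt (P.ms j t)) +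
          Real.sqrt α * (Real.sqrt (Real.log T) / Real.sqrt (P.ms j t)) :=
          add_le_add (habs.trans (hcast β hβ)) (hcast α hα0)
      _ = ((Real.sqrt α + Real.sqrt β) * Real.sqrt (Real.log T)) *
            (1 / Real.sqrt (P.ms j t)) := by ring
  have hstrict : ∀ t t', t ∈ F → t' ∈ F → t < t' → P.ms j t < P.ms j t' := by
    intro t t' ht ht' hlt
    simp only [hFdef, Finset.mem_filter, Finset.mem_Icc] at ht ht'
    have hsucc := P.ms_succ j t ht.1.1
    rw [if_pos ht.2] at hsucc
    have := ms_mono P j (t+1) t' (by omega) (by omega)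
    omega
  have hinj : ∀ t ∈ F, ∀ t' ∈ F, P.ms j t = P.ms j t' → t = t' := by
    intro t ht t' ht' heq
    by_contra hne
    rcases Nat.lt_or_ge t t' with h | h
    · exact absurd heq (Nat.ne_of_lt (hstrict t t' ht ht' h))
    · have : t' < t := by omega
      exact absurd heq.symm (Nat.ne_of_lt (hstrict t' t ht' ht this))
  have himg : ∑ t ∈ F, 1 / Real.sqrt (P.ms j t) =
      ∑ k ∈ F.image (fun t => P.ms j t), 1 / Real.sqrt k :=
    by rw [Finset.sum_image hinj]
  have hsub : F.image (fun t => P.ms j t) ⊆ Finset.Icc 1 (P.ms j (T+1)) := by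
    intro k hk
    simp only [Finset.mem_image] at hk
    obtain ⟨t, htF, rfl⟩ := hk
    simp only [hFdef, Finset.mem_filter, Finset.mem_Icc] at htF
    refine Finset.mem_Icc.2 ⟨ms_pos P j htF.1.1, ?_⟩
    exact ms_mono P j t (T+1) htF.1.1 (by omega)
  have hsum : ∑ t ∈ F, 1 / Real.sqrt (P.ms j t) ≤ 2 * Real.sqrt (P.ms j (T+1)) := by
    rw [himg]
    calc ∑ k ∈ F.image (fun t => P.ms j t), 1 / Real.sqrt k
        ≤ ∑ k ∈ Finset.Icc 1 (P.ms j (T+1)), 1 / Real.sqrt k := by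
          apply Finset.sum_le_sum_of_subset_of_nonneg hsub
          intro k _ _; positivity
      _ ≤ 2 * Real.sqrt (P.ms j (T+1)) := sum_one_div_sqrt_le _
  have hc0 : 0 ≤ (Real.sqrt α + Real.sqrt β) * Real.sqrt (Real.log T) := by positivity
  calc ∑ t ∈ F, (P.S j - P.price t)
      ≤ ∑ t ∈ F, ((Real.sqrt α + Real.sqrt β) * Real.sqrt (Real.log T)) *
          (1 / Real.sqrt (P.ms j t)) := Finset.sum_le_sum key
    _ = ((Real.sqrt α + Real.sqrt β) * Real.sqrt (Real.log T)) *
          ∑ t ∈ F, 1 / Real.sqrt (P.ms j t) := by rw [Finset.mul_sum]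
    _ ≤ ((Real.sqrt α + Real.sqrt β) * Real.sqrt (Real.log T)) *
          (2 * Real.sqrt (P.ms j (T+1))) := mul_le_mul_of_nonneg_left hsum hc0
    _ = 2 * (Real.sqrt α + Real.sqrt β) *
          Real.sqrt ((P.ms j (T + 1) : ℝ) * Real.log T) := by
        rw [Real.sqrt_mul (by positivity)]; ring
end

section
/- Optimality of matching the K* highest-valuation buyers with the K* lowest-valuation sellers (Proposition 2): for every pair of subsets T_b ⊆ {1,…,N} and T_s ⊆ {1,…,M} with |T_b| = |T_s|, it holds that Σ_{i∈T_b} B_i − Σ_{j∈T_s} S_j ≤ Σ_{i=1}^{K*} B_i − Σ_{j=1}^{K*} S_j. In particular, the optimal action for a centralized decision maker choosing equal-cardinality sets of participating buyers and sellers to maximize the sum of chosen buyers' valuations minus the sum of chosen sellers' valuations is to choose the buyers {1,…,K*} and the sellers {1,…,K*}. -/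
lemma aux_sum (N : ℕ) (B : ℕ → ℝ) (hB : ∀ i i', 1 ≤ i → i ≤ i' → i' ≤ N → B i' ≤ B i)
    (T : Finset ℕ) (hT : T ⊆ Finset.Icc 1 N) :
    ∑ i ∈ T, B i ≤ ∑ i ∈ Finset.Icc 1 T.card, B i := by
  classical
  induction T using Finset.strongInduction with
  | _ T ih =>
    rcases T.eq_empty_or_nonempty with rfl | hne
    · simp
    · set m := T.max' hne with hm
      have hmT : m ∈ T := T.max'_mem hne
      have hmN := Finset.mem_Icc.mp (hT hmT)
      have hsub : T ⊆ Finset.Icc 1 m := fun x hx =>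
        Finset.mem_Icc.mpr ⟨(Finset.mem_Icc.mp (hT hx)).1, T.le_max' x hx⟩
      have hcard_le : T.card ≤ m := by
        have := Finset.card_le_card hsub
        simpa [Nat.card_Icc] using this
      have hk : 1 ≤ T.card := Finset.card_pos.mpr hne
      have key := ih (T.erase m) (Finset.erase_ssubset hmT)
        ((Finset.erase_subset m T).trans hT)
      have hce : (T.erase m).card = T.card - 1 := Finset.card_erase_of_mem hmT
      have hsplit : ∑ i ∈ T, B i = B m + ∑ i ∈ T.erase m, B i :=
        (Finset.add_sum_erase T B hmT).symm
      have hIcc : ∑ i ∈ Finset.Icc 1 T.card, B i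
          = ∑ i ∈ Finset.Icc 1 (T.card - 1), B i + B T.card := by
        have h1 : T.card = (T.card - 1) + 1 := (Nat.succ_pred_eq_of_pos hk).symm
        rw [h1, Finset.sum_Icc_succ_top (by omega)]; simp
      have hBm : B m ≤ B T.card := hB T.card m hk hcard_le hmN.2
      rw [hce] at key
      rw [hsplit, hIcc]
      linarith

/-- Optimality of matching the `K*` highest-valuation buyers with the
`K*` lowest-valuation sellers: for every pair of subsets `Tb ⊆ {1,…,N}`,
`Ts ⊆ {1,…,M}` of equal cardinality, the sum of chosen buyers' valuations minus the sum
of chosen sellers' valuations is at most `Σ_{i=1}^{K*} B i − Σ_{j=1}^{K*} S j`; hence the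
optimal centralized choice is the buyers `{1,…,K*}` and the sellers `{1,…,K*}`. -/
theorem stmt_16 (N M : ℕ) (B S : ℕ → ℝ)
    (hBsort : ∀ i i', 1 ≤ i → i ≤ i' → i' ≤ N → B i' ≤ B i)
    (hSsort : ∀ j j', 1 ≤ j → j ≤ j' → j' ≤ M → S j ≤ S j')
    (Tb Ts : Finset ℕ)
    (hTb : Tb ⊆ Finset.Icc 1 N) (hTs : Ts ⊆ Finset.Icc 1 M)
    (hcard : Tb.card = Ts.card) :
    ∑ i ∈ Tb, B i - ∑ j ∈ Ts, S j
      ≤ ∑ i ∈ Finset.Icc 1 (Kstar N M B S), B i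
        - ∑ j ∈ Finset.Icc 1 (Kstar N M B S), S j := by
  classical
  set K := Kstar N M B S with hK
  set k := Tb.card with hk
  set A : Set ℕ := {k : ℕ | 1 ≤ k ∧ k ≤ min M N ∧ S k ≤ B k} with hA
  have hbdd : BddAbove A := ⟨min M N, fun x hx => hx.2.1⟩
  have hKA : ∀ i, i ∈ A → i ≤ K := fun i hi => le_csSup hbdd hi
  have hKmem : K ≤ min M N ∧ (1 ≤ K → S K ≤ B K) := by
    rcases A.eq_empty_or_nonempty with hAe | hAne
    · have : K = 0 := by
        rw [hK]; unfold Kstar; rw [← hA, hAe]; exact csSup_empty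
      simp [this]
    · have hKm : K ∈ A := Nat.sSup_mem hAne hbdd
      exact ⟨hKm.2.1, fun _ => hKm.2.2⟩
  have hkN : k ≤ N := by
    have := Finset.card_le_card hTb
    simpa [Nat.card_Icc] using this
  have hkM : k ≤ M := by
    have := Finset.card_le_card hTs
    rw [hcard]
    simpa [Nat.card_Icc] using this
  -- step 1
  have h1 : ∑ i ∈ Tb, B i ≤ ∑ i ∈ Finset.Icc 1 k, B i := aux_sum N B hBsort Tb hTb
  have h2 : ∑ j ∈ Finset.Icc 1 k, S j ≤ ∑ j ∈ Ts, S j := by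
    have := aux_sum M (fun j => -S j)
      (fun i i' h1 h2 h3 => neg_le_neg (hSsort i i' h1 h2 h3)) Ts hTs
    rw [← hcard] at this
    simp only [Finset.sum_neg_distrib] at this
    linarith
  -- step 2 : compare Icc 1 k with Icc 1 K
  have h3 : ∑ i ∈ Finset.Icc 1 k, (B i - S i) ≤ ∑ i ∈ Finset.Icc 1 K, (B i - S i) := by
    have hIoc : ∀ n : ℕ, Finset.Icc 1 n = Finset.Ioc 0 n := by
      intro n; ext x; simp [Nat.lt_iff_add_one_le]
    rcases le_or_gt k K with hle | hlt
    · have hsplit := Finset.sum_Ioc_consecutive (fun i => B i - S i)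
        (Nat.zero_le k) hle
      rw [hIoc, hIoc, ← hsplit]
      have : 0 ≤ ∑ i ∈ Finset.Ioc k K, (B i - S i) := by
        apply Finset.sum_nonneg
        intro i hi
        rw [Finset.mem_Ioc] at hi
        have hi1 : 1 ≤ i := by omega
        have hiK : i ≤ K := hi.2
        have hKmin := hKmem.1
        have h1K : 1 ≤ K := le_trans hi1 hiK
        have hBS : S K ≤ B K := hKmem.2 h1K
        have hBi : B K ≤ B i := hBsort i K hi1 hiK (le_trans hKmin (min_le_right _ _))
        have hSi : S i ≤ S K := hSsort i K hi1 hiK (le_trans hKmin (min_le_left _ _))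
        linarith
      linarith
    · have hsplit := Finset.sum_Ioc_consecutive (fun i => B i - S i)
        (Nat.zero_le K) hlt.le
      rw [hIoc, hIoc, ← hsplit]
      have : ∑ i ∈ Finset.Ioc K k, (B i - S i) ≤ 0 := by
        apply Finset.sum_nonpos
        intro i hi
        rw [Finset.mem_Ioc] at hi
        have hi1 : 1 ≤ i := by omega
        have hnot : i ∉ A := fun hmem => absurd (hKA i hmem) (by omega)
        have : ¬ (S i ≤ B i) := fun h => hnot ⟨hi1, le_min (le_trans hi.2 hkM) (le_trans hi.2 hkN), h⟩
        linarith [lt_of_not_ge this]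
      linarith
  simp only [Finset.sum_sub_distrib] at h3
  linarith
end
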